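/- arXiv:2306.09007 — 7 statements merged into one kernel-verified Lean document; each statement's English description precedes it below -/
import Mathlib

section
/- Let V be an irreducible representation of G over k, let W be a nonzero proper H-subrepresentation of the restriction V|_H, and let g be an element of G not lying in H. Then V decomposes as the internal direct sum V = W ⊕ gW of H-subrepresentations, and both W and gW are irreducible as representations of H. -/
/-!
Since `H` has index 2 and `g ∉ H`, every `x ∈ G` either lies in `H` and fixes both `W` and
`gW`, or lies in `gH` and swaps them. Hence `W ⊔ gW` and `W ⊓ gW` are `G`-stable, so
irreducibility of `V` forces `V = W ⊕ gW`. If `U ≤ W` is a nonzero `H`-subrepresentation, the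
same argument gives `U ⊔ gU = V`, and the modular law yields `W = U ⊔ (gU ⊓ W) = U` because
`gU ⊓ W ≤ gW ⊓ W = 0`. As `gW` is again a proper `H`-subrepresentation, the same applies to it.
-/

namespace Representation

section Group

variable {k G V : Type*} [CommSemiring k] [Group G] [AddCommMonoid V] [Module k V]
  {ρ : Representation k G V}

theorem map_map_eq_map_mul (a b : G) (U : Submodule k V) :
    (U.map (ρ b)).map (ρ a) = U.map (ρ (a * b)) := by
  rw [← Submodule.map_comp, ← Module.End.mul_eq_comp, ← map_mul]

theorem map_one_eq_self (U : Submodule k V) : U.map (ρ 1) = U := by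
  rw [map_one, Module.End.one_eq_id, Submodule.map_id]

theorem mem_invtSubmodule_iff_forall_mem {U : Submodule k V} :
    U ∈ ρ.invtSubmodule ↔ ∀ g, ∀ v ∈ U, ρ g v ∈ U := by
  simp [mem_invtSubmodule, Module.End.mem_invtSubmodule_iff_forall_mem_of_mem]

theorem mem_invtSubmodule_iff_forall_map_le {U : Submodule k V} :
    U ∈ ρ.invtSubmodule ↔ ∀ g, U.map (ρ g) ≤ U := by
  simp [mem_invtSubmodule, Module.End.mem_invtSubmodule_iff_map_le]

variable {H : Subgroup G} {U : Submodule k V}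

theorem mem_invtSubmodule_comp_subtype_iff :
    U ∈ invtSubmodule (ρ.comp H.subtype) ↔ ∀ h ∈ H, ∀ v ∈ U, ρ h v ∈ U := by
  simp [mem_invtSubmodule, Module.End.mem_invtSubmodule_iff_forall_mem_of_mem]

theorem mem_invtSubmodule_comp_subtype_iff_map_le :
    U ∈ invtSubmodule (ρ.comp H.subtype) ↔ ∀ h ∈ H, U.map (ρ h) ≤ U := by
  simp [mem_invtSubmodule, Module.End.mem_invtSubmodule_iff_map_le]

theorem map_eq_self_of_mem_invtSubmodule_comp_subtype
    (hU : U ∈ invtSubmodule (ρ.comp H.subtype)) {h : G} (hh : h ∈ H) : U.map (ρ h) = U := by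
  rw [mem_invtSubmodule_comp_subtype_iff_map_le] at hU
  refine le_antisymm (hU h hh) ?_
  calc U = (U.map (ρ h⁻¹)).map (ρ h) := by
        rw [map_map_eq_map_mul, mul_inv_cancel, map_one_eq_self]
    _ ≤ U.map (ρ h) := Submodule.map_mono (hU h⁻¹ (H.inv_mem hh))

section IndexTwo

variable {g x : G}

theorem map_eq_map_of_notMem (hH : H.index = 2) (hU : U ∈ invtSubmodule (ρ.comp H.subtype))
    (hg : g ∉ H) (hx : x ∉ H) : U.map (ρ x) = U.map (ρ g) := by
  have hgx : g⁻¹ * x ∈ H :=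
    (Subgroup.mul_mem_iff_of_index_two hH).2 (iff_of_false (inv_mem_iff.not.2 hg) hx)
  rw [← mul_inv_cancel_left g x, ← map_map_eq_map_mul,
    map_eq_self_of_mem_invtSubmodule_comp_subtype hU hgx]

theorem map_map_of_notMem (hH : H.index = 2) (hU : U ∈ invtSubmodule (ρ.comp H.subtype))
    (hg : g ∉ H) (hx : x ∉ H) : (U.map (ρ g)).map (ρ x) = U := by
  rw [map_map_eq_map_mul, map_eq_self_of_mem_invtSubmodule_comp_subtype hU
    ((Subgroup.mul_mem_iff_of_index_two hH).2 (iff_of_false hx hg))]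

theorem map_mem_invtSubmodule_comp_subtype (hH : H.index = 2)
    (hU : U ∈ invtSubmodule (ρ.comp H.subtype)) (hg : g ∉ H) :
    U.map (ρ g) ∈ invtSubmodule (ρ.comp H.subtype) := by
  refine mem_invtSubmodule_comp_subtype_iff_map_le.2 fun h hh => le_of_eq ?_
  rw [map_map_eq_map_mul, map_eq_map_of_notMem hH hU hg
    fun hhg => hg ((H.mul_mem_cancel_left hh).1 hhg)]

theorem sup_map_mem_invtSubmodule (hH : H.index = 2)
    (hU : U ∈ invtSubmodule (ρ.comp H.subtype)) (hg : g ∉ H) :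
    U ⊔ U.map (ρ g) ∈ ρ.invtSubmodule := by
  refine mem_invtSubmodule_iff_forall_map_le.2 fun x => le_of_eq ?_
  rw [Submodule.map_sup]
  by_cases hx : x ∈ H
  · rw [map_eq_self_of_mem_invtSubmodule_comp_subtype hU hx,
      map_eq_self_of_mem_invtSubmodule_comp_subtype
        (map_mem_invtSubmodule_comp_subtype hH hU hg) hx]
  · rw [map_eq_map_of_notMem hH hU hg hx, map_map_of_notMem hH hU hg hx, sup_comm]

theorem inf_map_mem_invtSubmodule (hH : H.index = 2)
    (hU : U ∈ invtSubmodule (ρ.comp H.subtype)) (hg : g ∉ H) :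
    U ⊓ U.map (ρ g) ∈ ρ.invtSubmodule := by
  refine mem_invtSubmodule_iff_forall_map_le.2 fun x => (Submodule.map_inf_le _).trans ?_
  by_cases hx : x ∈ H
  · rw [map_eq_self_of_mem_invtSubmodule_comp_subtype hU hx,
      map_eq_self_of_mem_invtSubmodule_comp_subtype
        (map_mem_invtSubmodule_comp_subtype hH hU hg) hx]
  · rw [map_eq_map_of_notMem hH hU hg hx, map_map_of_notMem hH hU hg hx, inf_comm]

end IndexTwo

end Group

section Irreducible

variable {k G V : Type*} [CommRing k] [Group G] [AddCommGroup V] [Module k V]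
  {ρ : Representation k G V} {H : Subgroup G} {W : Submodule k V} {g : G}

theorem disjoint_map_of_ne_top (hirr : ∀ U ∈ ρ.invtSubmodule, U = ⊥ ∨ U = ⊤)
    (hH : H.index = 2) (hW : W ∈ invtSubmodule (ρ.comp H.subtype)) (hg : g ∉ H)
    (hWt : W ≠ ⊤) : Disjoint W (W.map (ρ g)) := by
  refine disjoint_iff.2 ((hirr _ (inf_map_mem_invtSubmodule hH hW hg)).resolve_right fun h => ?_)
  exact hWt (eq_top_mono inf_le_left h)

theorem codisjoint_map_of_ne_bot (hirr : ∀ U ∈ ρ.invtSubmodule, U = ⊥ ∨ U = ⊤)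
    (hH : H.index = 2) (hW : W ∈ invtSubmodule (ρ.comp H.subtype)) (hg : g ∉ H)
    (hW0 : W ≠ ⊥) : Codisjoint W (W.map (ρ g)) := by
  refine codisjoint_iff.2 ((hirr _ (sup_map_mem_invtSubmodule hH hW hg)).resolve_left fun h => ?_)
  exact hW0 (eq_bot_mono le_sup_left h)

theorem eq_bot_or_eq_of_le_of_ne_top (hirr : ∀ U ∈ ρ.invtSubmodule, U = ⊥ ∨ U = ⊤)
    (hH : H.index = 2) (hW : W ∈ invtSubmodule (ρ.comp H.subtype)) (hg : g ∉ H)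
    (hWt : W ≠ ⊤) {U : Submodule k V} (hUW : U ≤ W)
    (hU : U ∈ invtSubmodule (ρ.comp H.subtype)) : U = ⊥ ∨ U = W := by
  refine (hirr _ (sup_map_mem_invtSubmodule hH hU hg)).imp
    (fun h => eq_bot_mono le_sup_left h) fun h => ?_
  have hgU : Disjoint (U.map (ρ g)) W :=
    ((disjoint_map_of_ne_top hirr hH hW hg hWt).mono_right (Submodule.map_mono hUW)).symm
  calc U = U ⊔ U.map (ρ g) ⊓ W := by rw [hgU.eq_bot, sup_bot_eq]
    _ = (U ⊔ U.map (ρ g)) ⊓ W := (sup_inf_assoc_of_le _ hUW).symm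
    _ = W := by rw [h, top_inf_eq]

end Irreducible

end Representation

open Representation

theorem statement0_general {k G V : Type*} [Field k] [Group G] [AddCommGroup V] [Module k V]
    (H : Subgroup G) (hH : H.index = 2)
    (ρ : Representation k G V)
    (hirr : Nontrivial V ∧
      ∀ U : Submodule k V, (∀ g : G, ∀ v ∈ U, ρ g v ∈ U) → U = ⊥ ∨ U = ⊤)
    (W : Submodule k V) (hW0 : W ≠ ⊥) (hWt : W ≠ ⊤)
    (hstab : ∀ h ∈ H, ∀ v ∈ W, ρ h v ∈ W)
    (g : G) (hg : g ∉ H) :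
    -- `gW` is again an `H`-subrepresentation
    (∀ h ∈ H, ∀ v ∈ W.map (ρ g), ρ h v ∈ W.map (ρ g)) ∧
    -- `V = W ⊕ gW` as an internal direct sum
    IsCompl W (W.map (ρ g)) ∧
    -- `W` is irreducible as a representation of `H`
    (W ≠ ⊥ ∧ ∀ U : Submodule k V, U ≤ W →
        (∀ h ∈ H, ∀ v ∈ U, ρ h v ∈ U) → U = ⊥ ∨ U = W) ∧
    -- `gW` is irreducible as a representation of `H`
    (W.map (ρ g) ≠ ⊥ ∧ ∀ U : Submodule k V, U ≤ W.map (ρ g) →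
        (∀ h ∈ H, ∀ v ∈ U, ρ h v ∈ U) → U = ⊥ ∨ U = W.map (ρ g)) := by
  have hV : ∀ U ∈ ρ.invtSubmodule, U = ⊥ ∨ U = ⊤ :=
    fun U hU => hirr.2 U (mem_invtSubmodule_iff_forall_mem.1 hU)
  have hW := mem_invtSubmodule_comp_subtype_iff.2 hstab
  have hgW := map_mem_invtSubmodule_comp_subtype hH hW hg
  have hcompl : IsCompl W (W.map (ρ g)) :=
    ⟨disjoint_map_of_ne_top hV hH hW hg hWt,
      codisjoint_map_of_ne_bot hV hH hW hg hW0⟩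
  have hgWt : W.map (ρ g) ≠ ⊤ := fun h => hW0 (eq_bot_of_isCompl_top (h ▸ hcompl))
  refine ⟨mem_invtSubmodule_comp_subtype_iff.1 hgW, hcompl,
    ⟨hW0, fun U hUW hU => eq_bot_or_eq_of_le_of_ne_top hV hH hW hg hWt hUW
      (mem_invtSubmodule_comp_subtype_iff.2 hU)⟩,
    fun h => hWt (eq_top_of_isCompl_bot (h ▸ hcompl)),
    fun U hUW hU => eq_bot_or_eq_of_le_of_ne_top hV hH hgW hg hgWt hUW
      (mem_invtSubmodule_comp_subtype_iff.2 hU)⟩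

/-- Let `V` be an irreducible representation of `G` over `k`, let `W` be a
nonzero proper `H`-subrepresentation of the restriction `V|_H` (where `H` is a normal
subgroup of `G` of index 2), and let `g ∈ G` with `g ∉ H`. Then `V = W ⊕ gW` as an
internal direct sum of `H`-subrepresentations, and both `W` and `gW` are irreducible as
representations of `H`. -/
theorem statement0 {k G V : Type*} [Field k] [Group G] [AddCommGroup V] [Module k V]
    (H : Subgroup G) [H.Normal] (hH : H.index = 2)
    (ρ : Representation k G V)
    (hirr : Nontrivial V ∧
      ∀ U : Submodule k V, (∀ g : G, ∀ v ∈ U, ρ g v ∈ U) → U = ⊥ ∨ U = ⊤)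
    (W : Submodule k V) (hW0 : W ≠ ⊥) (hWt : W ≠ ⊤)
    (hstab : ∀ h ∈ H, ∀ v ∈ W, ρ h v ∈ W)
    (g : G) (hg : g ∉ H) :
    -- `gW` is again an `H`-subrepresentation
    (∀ h ∈ H, ∀ v ∈ W.map (ρ g), ρ h v ∈ W.map (ρ g)) ∧
    -- `V = W ⊕ gW` as an internal direct sum
    IsCompl W (W.map (ρ g)) ∧
    -- `W` is irreducible as a representation of `H`
    (W ≠ ⊥ ∧ ∀ U : Submodule k V, U ≤ W →
        (∀ h ∈ H, ∀ v ∈ U, ρ h v ∈ U) → U = ⊥ ∨ U = W) ∧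
    -- `gW` is irreducible as a representation of `H`
    (W.map (ρ g) ≠ ⊥ ∧ ∀ U : Submodule k V, U ≤ W.map (ρ g) →
        (∀ h ∈ H, ∀ v ∈ U, ρ h v ∈ U) → U = ⊥ ∨ U = W.map (ρ g)) :=
  statement0_general H hH ρ hirr W hW0 hWt hstab g hg
end

section
/- Let σ be an irreducible representation of H over k and suppose that Ind_H^G σ decomposes as an internal direct sum ρ₁ ⊕ ρ₂ of two nonzero G-subrepresentations. Then ρ₁ and ρ₂ are irreducible representations of G, and the restrictions ρ₁|_H and ρ₂|_H are both isomorphic to σ as representations of H. -/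
/-!
Fix `t ∉ H`, so that `G = H ∪ t H` and an element `f` of `Ind_H^G σ` is determined by `f 1` and
`f t`; evaluation at `1` is `H`-equivariant. For a nonzero `G`-stable `ρ`, its image under
evaluation at `1` is a nonzero `σ`-stable subspace, hence all of `W`. If `ρ` also met the kernel
of evaluation at `1`, evaluation at `t` would map that intersection onto the irreducible twist
`h ↦ σ (t⁻¹ h t)`, which puts the whole kernel inside `ρ` and forces `ρ = ⊤`. So for a proper
`ρ`, evaluation at `1` is an `H`-isomorphism `ρ ≅ σ`, and a nonzero `G`-stable `U ≤ ρ`, having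
the same image, is all of `ρ`.
-/

variable {k : Type*} [Field k] {G : Type*} [Group G] (H : Subgroup G)
  {W : Type*} [AddCommGroup W] [Module k W]

/-- The underlying space of the induced representation `Ind_H^G σ = k[G] ⊗_{k[H]} W`
(`H` of finite index): functions `f : G → W` with `f (x * h) = σ h⁻¹ (f x)` for `h ∈ H`.
For a finite-index subgroup this function model realizes the induced representation. -/
def indSupport (σ : Representation k H W) : Submodule k (G → W) where
  carrier := {f | ∀ (h : H) (x : G), f (x * (h : G)) = σ h⁻¹ (f x)}
  add_mem' := by
    intro a b ha hb h x
    simp only [Pi.add_apply, ha h x, hb h x, map_add]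
  zero_mem' := by
    intro h x
    simp
  smul_mem' := by
    intro c f hf h x
    simp only [Pi.smul_apply, hf h x, map_smul]

/-- The action of `g : G` on the induced representation, by right translation. -/
def indAct (σ : Representation k H W) (g : G) :
    indSupport H σ →ₗ[k] indSupport H σ where
  toFun f := ⟨fun x => (f : G → W) (g⁻¹ * x), by
    intro h x
    simpa [mul_assoc] using f.2 h (g⁻¹ * x)⟩
  map_add' f₁ f₂ := rfl
  map_smul' c f := rfl

/-- The induced representation `Ind_H^G σ` of `σ : Representation k H W`. -/
def indRep (σ : Representation k H W) : Representation k G ↥(indSupport H σ) where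
  toFun := indAct H σ
  map_one' := by
    ext f x
    simp [indAct]
  map_mul' g₁ g₂ := by
    ext f x
    simp [indAct, mul_assoc]

section

variable {H}

def indEval (σ : Representation k H W) (x : G) : indSupport H σ →ₗ[k] W :=
  (LinearMap.proj x).comp (indSupport H σ).subtype

variable {σ : Representation k H W}

@[simp]
lemma indEval_apply (x : G) (f : indSupport H σ) : indEval σ x f = (f : G → W) x := rfl

lemma indEval_indRep (g x : G) (f : indSupport H σ) :
    indEval σ x (indRep H σ g f) = indEval σ (g⁻¹ * x) f := rfl

lemma indEval_of_inv_mul_mem {x y : G} (hxy : y⁻¹ * x ∈ H) (f : indSupport H σ) :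
    indEval σ x f = σ ⟨y⁻¹ * x, hxy⟩⁻¹ (indEval σ y f) := by
  simpa using f.2 ⟨y⁻¹ * x, hxy⟩ y

lemma indEval_mul_inv (x : G) (h : H) (f : indSupport H σ) :
    indEval σ (x * (h : G)⁻¹) f = σ h (indEval σ x f) := by
  simpa using f.2 h⁻¹ x

lemma indEval_one_indRep_of_mem (h : H) (f : indSupport H σ) :
    indEval σ 1 (indRep H σ h f) = σ h (indEval σ 1 f) := by
  rw [indEval_indRep, mul_one]
  simpa using indEval_mul_inv 1 h f

lemma indEval_indRep_conj (t : G) (h : H) (f : indSupport H σ) :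
    indEval σ t (indRep H σ (t * h * t⁻¹) f) = σ h (indEval σ t f) := by
  rw [indEval_indRep, show (t * h * t⁻¹)⁻¹ * t = t * (h : G)⁻¹ by group]
  exact indEval_mul_inv t h f

lemma indSupport_ext_of_index_eq_two (hH : H.index = 2) {t : G} (ht : t ∉ H)
    {f f' : indSupport H σ} (h₁ : indEval σ 1 f = indEval σ 1 f')
    (hₜ : indEval σ t f = indEval σ t f') : f = f' := by
  ext x
  change indEval σ x f = indEval σ x f'
  by_cases hx : x ∈ H
  · have hx' : (1 : G)⁻¹ * x ∈ H := by simpa using hx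
    rw [indEval_of_inv_mul_mem hx', indEval_of_inv_mul_mem hx', h₁]
  · have hx' : t⁻¹ * x ∈ H := by
      rw [Subgroup.mul_mem_iff_of_index_two hH, inv_mem_iff]
      tauto
    rw [indEval_of_inv_mul_mem hx', indEval_of_inv_mul_mem hx', hₜ]

lemma map_indEval_one_eq_top
    (hσ : ∀ U : Submodule k W, (∀ h : H, ∀ w ∈ U, σ h w ∈ U) → U = ⊥ ∨ U = ⊤)
    {ρ : Submodule k (indSupport H σ)} (hρ : ∀ g : G, ∀ f ∈ ρ, indRep H σ g f ∈ ρ)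
    (hne : ρ ≠ ⊥) : ρ.map (indEval σ 1) = ⊤ := by
  refine (hσ _ ?_).resolve_left fun hbot => hne ?_
  · rintro h _ ⟨f, hf, rfl⟩
    exact ⟨indRep H σ h f, hρ _ f hf, indEval_one_indRep_of_mem h f⟩
  · refine (Submodule.eq_bot_iff _).2 fun f hf => ?_
    ext x
    -- `f x` is the value at `1` of the translate of `f` by `x⁻¹`, which lies in `ρ`
    have := (Submodule.eq_bot_iff _).1 hbot _ ⟨_, hρ x⁻¹ f hf, rfl⟩
    rwa [indEval_indRep, inv_inv, mul_one] at this

lemma ker_indEval_one_le [H.Normal] (hH : H.index = 2)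
    (hσ : ∀ U : Submodule k W, (∀ h : H, ∀ w ∈ U, σ h w ∈ U) → U = ⊥ ∨ U = ⊤)
    {ρ : Submodule k (indSupport H σ)} (hρ : ∀ g : G, ∀ f ∈ ρ, indRep H σ g f ∈ ρ)
    (hmeet : ρ ⊓ LinearMap.ker (indEval σ 1) ≠ ⊥) : LinearMap.ker (indEval σ 1) ≤ ρ := by
  obtain ⟨t, ht⟩ : ∃ t, t ∉ H := SetLike.exists_not_mem_of_ne_top H
    (fun h => by simp [h] at hH)
  set K := ρ ⊓ LinearMap.ker (indEval σ 1)
  have hK : K.map (indEval σ t) = ⊤ := by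
    refine (hσ _ ?_).resolve_left fun hbot => hmeet ?_
    · rintro h _ ⟨f, hf, rfl⟩
      obtain ⟨hfρ, hf₁⟩ := Submodule.mem_inf.1 hf
      let c : H := ⟨t * h * t⁻¹, Subgroup.Normal.conj_mem ‹_› _ h.2 t⟩
      refine ⟨indRep H σ c f, Submodule.mem_inf.2 ⟨hρ _ f hfρ, ?_⟩, indEval_indRep_conj t h f⟩
      rw [LinearMap.mem_ker, indEval_one_indRep_of_mem, LinearMap.mem_ker.1 hf₁, map_zero]
    · refine (Submodule.eq_bot_iff _).2 fun f hf => ?_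
      refine indSupport_ext_of_index_eq_two hH ht ?_ ?_
      · simpa using hf.2
      · simpa using (Submodule.eq_bot_iff _).1 hbot _ ⟨f, hf, rfl⟩
  intro f hf
  obtain ⟨f', hf'K, hf't⟩ : indEval σ t f ∈ K.map (indEval σ t) := hK ▸ Submodule.mem_top
  have : f' = f := indSupport_ext_of_index_eq_two hH ht
    ((LinearMap.mem_ker.1 hf'K.2).trans (LinearMap.mem_ker.1 hf).symm) hf't
  exact this ▸ hf'K.1

lemma disjoint_ker_indEval_one [H.Normal] (hH : H.index = 2)
    (hσ : ∀ U : Submodule k W, (∀ h : H, ∀ w ∈ U, σ h w ∈ U) → U = ⊥ ∨ U = ⊤)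
    {ρ : Submodule k (indSupport H σ)} (hρ : ∀ g : G, ∀ f ∈ ρ, indRep H σ g f ∈ ρ)
    (hne : ρ ≠ ⊥) (hρ_ne_top : ρ ≠ ⊤) : Disjoint ρ (LinearMap.ker (indEval σ 1)) := by
  refine disjoint_iff.2 (by_contra fun hmeet => hρ_ne_top (eq_top_iff.2 ?_))
  have hmap : (⊤ : Submodule k (indSupport H σ)).map (indEval σ 1) ≤ ρ.map (indEval σ 1) := by
    rw [map_indEval_one_eq_top hσ hρ hne]
    exact le_top
  rwa [LinearMap.map_le_map_iff, sup_eq_left.2 (ker_indEval_one_le hH hσ hρ hmeet)] at hmap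

theorem indRep_irreducible_and_restrict_equiv_of_ne_bot_of_ne_top [H.Normal]
    (hH : H.index = 2)
    (hσ : ∀ U : Submodule k W, (∀ h : H, ∀ w ∈ U, σ h w ∈ U) → U = ⊥ ∨ U = ⊤)
    {ρ : Submodule k (indSupport H σ)} (hρ : ∀ g : G, ∀ f ∈ ρ, indRep H σ g f ∈ ρ)
    (hne : ρ ≠ ⊥) (hρ_ne_top : ρ ≠ ⊤) :
    (∀ U : Submodule k (indSupport H σ), U ≤ ρ →
        (∀ g : G, ∀ f ∈ U, indRep H σ g f ∈ U) → U = ⊥ ∨ U = ρ) ∧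
    (∃ ι : W →ₗ[k] indSupport H σ, Function.Injective ι ∧ LinearMap.range ι = ρ ∧
        ∀ (h : H) (w : W), ι (σ h w) = indRep H σ (h : G) (ι w)) := by
  have hd := disjoint_ker_indEval_one hH hσ hρ hne hρ_ne_top
  refine ⟨fun U hUρ hU => or_iff_not_imp_left.2 fun hU_ne => ?_, ?_⟩
  · refine eq_of_le_of_inf_le_of_le_sup hUρ (hd.eq_bot ▸ bot_le) ?_
    rw [← LinearMap.map_le_map_iff, map_indEval_one_eq_top hσ hρ hne,
      map_indEval_one_eq_top hσ hU hU_ne]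
  let e : ρ ≃ₗ[k] W := LinearEquiv.ofBijective ((indEval σ 1).domRestrict ρ)
    ⟨LinearMap.injective_domRestrict_iff.2 hd, LinearMap.range_eq_top.1 <| by
      rw [LinearMap.range_domRestrict, map_indEval_one_eq_top hσ hρ hne]⟩
  have he : ∀ w, indEval σ 1 (e.symm w) = w := e.apply_symm_apply
  refine ⟨ρ.subtype ∘ₗ e.symm.toLinearMap, Subtype.val_injective.comp e.symm.injective, ?_,
    fun h w => LinearMap.injOn_of_disjoint_ker le_rfl hd (e.symm _).2 (hρ _ _ (e.symm w).2) ?_⟩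
  · rw [LinearMap.range_comp, LinearEquiv.range, Submodule.map_top, Submodule.range_subtype]
  · simp only [LinearMap.coe_comp, LinearEquiv.coe_coe, Submodule.coe_subtype, Function.comp_apply]
    rw [he, indEval_one_indRep_of_mem, he]

end

/-- Let `σ` be an irreducible representation of `H` over `k` (`H` normal of
index 2 in `G`) and suppose that `Ind_H^G σ` decomposes as an internal direct sum
`ρ₁ ⊕ ρ₂` of two nonzero `G`-subrepresentations. Then `ρ₁` and `ρ₂` are irreducible
representations of `G`, and the restrictions `ρ₁|_H` and `ρ₂|_H` are both isomorphic to
`σ` as representations of `H`. -/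
theorem statement4 [H.Normal] (hH : H.index = 2)
    (σ : Representation k H W)
    (hσ : Nontrivial W ∧
      ∀ U : Submodule k W, (∀ h : H, ∀ w ∈ U, σ h w ∈ U) → U = ⊥ ∨ U = ⊤)
    (ρ₁ ρ₂ : Submodule k ↥(indSupport H σ))
    (h₁ : ∀ g : G, ∀ f ∈ ρ₁, indRep H σ g f ∈ ρ₁)
    (h₂ : ∀ g : G, ∀ f ∈ ρ₂, indRep H σ g f ∈ ρ₂)
    (hne₁ : ρ₁ ≠ ⊥) (hne₂ : ρ₂ ≠ ⊥)
    (hcompl : IsCompl ρ₁ ρ₂) :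
    -- `ρ₁` and `ρ₂` are irreducible over `G`
    (∀ U : Submodule k ↥(indSupport H σ), U ≤ ρ₁ →
        (∀ g : G, ∀ f ∈ U, indRep H σ g f ∈ U) → U = ⊥ ∨ U = ρ₁) ∧
    (∀ U : Submodule k ↥(indSupport H σ), U ≤ ρ₂ →
        (∀ g : G, ∀ f ∈ U, indRep H σ g f ∈ U) → U = ⊥ ∨ U = ρ₂) ∧
    -- `ρ₁|_H ≅ σ` as representations of `H`
    (∃ ι : W →ₗ[k] ↥(indSupport H σ), Function.Injective ι ∧ LinearMap.range ι = ρ₁ ∧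
        ∀ (h : H) (w : W), ι (σ h w) = indRep H σ (h : G) (ι w)) ∧
    -- `ρ₂|_H ≅ σ` as representations of `H`
    (∃ ι : W →ₗ[k] ↥(indSupport H σ), Function.Injective ι ∧ LinearMap.range ι = ρ₂ ∧
        ∀ (h : H) (w : W), ι (σ h w) = indRep H σ (h : G) (ι w)) := by
  have hne_top₁ : ρ₁ ≠ ⊤ := fun h => hne₂ (eq_bot_of_isCompl_top (h ▸ hcompl.symm))
  have hne_top₂ : ρ₂ ≠ ⊤ := fun h => hne₁ (eq_bot_of_isCompl_top (h ▸ hcompl))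
  obtain ⟨hirr₁, hiso₁⟩ :=
    indRep_irreducible_and_restrict_equiv_of_ne_bot_of_ne_top hH hσ.2 h₁ hne₁ hne_top₁
  obtain ⟨hirr₂, hiso₂⟩ :=
    indRep_irreducible_and_restrict_equiv_of_ne_bot_of_ne_top hH hσ.2 h₂ hne₂ hne_top₂
  exact ⟨hirr₁, hirr₂, hiso₁, hiso₂⟩
end

section
/- Every irreducible representation σ of H over k is a direct summand of the restriction to H of some irreducible representation of G: there exist an irreducible G-representation ρ and an H-subrepresentation W of ρ|_H such that W is isomorphic to σ and W admits an H-stable complement in ρ. -/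
universe u

/-!
Model the induced representation as the coinduced one: functions `f : G → W` with
`f (h * x) = σ h (f x)`, on which `G` acts by right translation. Evaluation at `1` and extension
by zero off `H` exhibit `σ` as an `H`-direct summand of it, so if it is irreducible we are done.
Otherwise let `U` be a proper nonzero `G`-subrepresentation and `g₀ ∉ H`. Since `[G : H] = 2`,
such an `f` is determined by `f 1` and `f g₀`. The values at `g₀` of the functions in `U`
vanishing at `1` form an `H`-stable subspace of `W`; it cannot be all of `W` (translating by
`g₀⁻¹` would then give `U = ⊤`), so it is `0`. Hence evaluation at `1` maps `U` injectively, and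
by irreducibility of `σ` isomorphically, onto `W`, `H`-equivariantly; so `U` is irreducible
already as an `H`-representation, and `σ ≅ U|_H`.
-/

namespace Representation

variable {k G V W : Type*} [CommRing k] [Group G] [AddCommGroup V] [Module k V]
  [AddCommGroup W] [Module k W] {H : Subgroup G}

def IsSummandOfRes (ρ : Representation k G V) (σ : Representation k H W) : Prop :=
  ∃ Wsub Csub : Submodule k V,
    (∀ h ∈ H, ∀ v ∈ Wsub, ρ h v ∈ Wsub) ∧ (∀ h ∈ H, ∀ v ∈ Csub, ρ h v ∈ Csub) ∧
    IsCompl Wsub Csub ∧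
    ∃ ι : W →ₗ[k] V, Function.Injective ι ∧ LinearMap.range ι = Wsub ∧
      ∀ (h : H) (w : W), ι (σ h w) = ρ (h : G) (ι w)

lemma isSummandOfRes_of_leftInverse {ρ : Representation k G V} {σ : Representation k H W}
    (ι : W →ₗ[k] V) (π : V →ₗ[k] W) (hπι : Function.LeftInverse π ι)
    (hι : ∀ (h : H) (w : W), ι (σ h w) = ρ (h : G) (ι w))
    (hπ : ∀ (h : H) (v : V), π (ρ (h : G) v) = σ h (π v)) :
    IsSummandOfRes ρ σ := by
  have hidem : IsIdempotentElem (ι ∘ₗ π) := by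
    ext v
    simp [hπι (π v)]
  have hcompl := LinearMap.IsIdempotentElem.isCompl hidem
  rw [LinearMap.range_comp_of_range_eq_top ι
      (LinearMap.range_eq_top.mpr hπι.rightInverse.surjective),
    LinearMap.ker_comp_of_ker_eq_bot π (LinearMap.ker_eq_bot.mpr hπι.injective)] at hcompl
  refine ⟨_, _, ?_, ?_, hcompl, ι, hπι.injective, rfl, hι⟩
  · rintro h hh _ ⟨w, rfl⟩
    exact ⟨σ ⟨h, hh⟩ w, hι ⟨h, hh⟩ w⟩
  · intro h hh v hv
    rw [LinearMap.mem_ker] at hv ⊢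
    rw [hπ ⟨h, hh⟩, hv, map_zero]

lemma isSummandOfRes_of_linearEquiv {ρ : Representation k G V} {σ : Representation k H W}
    (e : V ≃ₗ[k] W) (he : ∀ (h : H) (v : V), e (ρ (h : G) v) = σ h (e v)) :
    IsSummandOfRes ρ σ :=
  isSummandOfRes_of_leftInverse e.symm.toLinearMap e.toLinearMap e.apply_symm_apply
    (fun h w => e.injective (by simp [he])) he

lemma eq_bot_or_eq_top_of_linearEquiv {ρ : Representation k G V} {σ : Representation k H W}
    (e : V ≃ₗ[k] W) (he : ∀ (h : H) (v : V), e (ρ (h : G) v) = σ h (e v))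
    (hσ : ∀ U : Submodule k W, (∀ h : H, ∀ w ∈ U, σ h w ∈ U) → U = ⊥ ∨ U = ⊤)
    (U : Submodule k V) (hU : ∀ g : G, ∀ v ∈ U, ρ g v ∈ U) : U = ⊥ ∨ U = ⊤ := by
  have hstable : ∀ h : H, ∀ w ∈ U.map (e : V →ₗ[k] W), σ h w ∈ U.map (e : V →ₗ[k] W) := by
    rintro h _ ⟨v, hv, rfl⟩
    exact ⟨ρ h v, hU h v hv, he h v⟩
  simpa only [Submodule.map_eq_bot_iff, Submodule.map_eq_top_iff] using hσ _ hstable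

section Coinduced

variable (σ : Representation k H W)

lemma coind_apply_coe (g x : G) (f : coindV H.subtype σ) :
    (coind H.subtype σ g f : G → W) x = (f : G → W) (x * g) := rfl

lemma coindV_apply_mul {f : G → W} (hf : f ∈ coindV H.subtype σ) (h : H) (x : G) :
    f (h * x) = σ h (f x) :=
  hf h x

lemma coindV_apply_of_mem {f : G → W} (hf : f ∈ coindV H.subtype σ) {x : G} (hx : x ∈ H) :
    f x = σ ⟨x, hx⟩ (f 1) := by
  simpa using hf ⟨x, hx⟩ 1

def coindEval (x : G) : coindV H.subtype σ →ₗ[k] W :=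
  LinearMap.proj x ∘ₗ (coindV H.subtype σ).subtype

lemma coindEval_one_equivariant (h : H) (f : coindV H.subtype σ) :
    coindEval σ 1 (coind H.subtype σ h f) = σ h (coindEval σ 1 f) := by
  show (f : G → W) (1 * h) = σ h ((f : G → W) 1)
  simpa using f.2 h 1

open scoped Classical in
noncomputable def coindExtendByZero : W →ₗ[k] coindV H.subtype σ where
  toFun w := ⟨fun x => if hx : x ∈ H then σ ⟨x, hx⟩ w else 0, fun h x => by
    dsimp only [Subgroup.subtype_apply]
    by_cases hx : x ∈ H
    · rw [dif_pos hx, dif_pos (mul_mem h.2 hx), ← Module.End.mul_apply, ← map_mul]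
      rfl
    · rw [dif_neg hx, dif_neg ((Subgroup.mul_mem_cancel_left H h.2).not.mpr hx), map_zero]⟩
  map_add' w w' := by ext x; by_cases hx : x ∈ H <;> simp [hx]
  map_smul' c w := by ext x; by_cases hx : x ∈ H <;> simp [hx]

lemma coindExtendByZero_apply_of_mem (w : W) {x : G} (hx : x ∈ H) :
    (coindExtendByZero σ w : G → W) x = σ ⟨x, hx⟩ w := by
  simp [coindExtendByZero, hx]

lemma coindExtendByZero_apply_of_notMem (w : W) {x : G} (hx : x ∉ H) :
    (coindExtendByZero σ w : G → W) x = 0 := by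
  simp [coindExtendByZero, hx]

lemma leftInverse_coindEval_one_coindExtendByZero :
    Function.LeftInverse (coindEval σ 1) (coindExtendByZero σ) := fun w =>
  (coindExtendByZero_apply_of_mem σ w (one_mem H)).trans (map_one σ ▸ rfl)

lemma coindExtendByZero_equivariant (h : H) (w : W) :
    coindExtendByZero σ (σ h w) = coind H.subtype σ h (coindExtendByZero σ w) := by
  ext x
  by_cases hx : x ∈ H
  · rw [coind_apply_coe, coindExtendByZero_apply_of_mem σ _ hx,
      coindExtendByZero_apply_of_mem σ _ (mul_mem hx h.2), ← Module.End.mul_apply, ← map_mul]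
    rfl
  · rw [coind_apply_coe, coindExtendByZero_apply_of_notMem σ _ hx,
      coindExtendByZero_apply_of_notMem σ _ ((Subgroup.mul_mem_cancel_right H h.2).not.mpr hx)]

theorem isSummandOfRes_coind : IsSummandOfRes (coind H.subtype σ) σ :=
  isSummandOfRes_of_leftInverse _ _ (leftInverse_coindEval_one_coindExtendByZero σ)
    (coindExtendByZero_equivariant σ) (coindEval_one_equivariant σ)

section IndexTwo

variable (hH : H.index = 2) {g₀ : G}
include hH

lemma coindV_apply_of_notMem (hg₀ : g₀ ∉ H) {f : G → W} (hf : f ∈ coindV H.subtype σ) {x : G}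
    (hx : x ∉ H) :
    f x = σ ⟨x * g₀⁻¹, (Subgroup.mul_mem_iff_of_index_two hH).mpr
      (iff_of_false hx (inv_mem_iff.not.mpr hg₀))⟩ (f g₀) := by
  simpa using hf ⟨x * g₀⁻¹, _⟩ g₀

lemma coindV_ext_of_index_eq_two (hg₀ : g₀ ∉ H) {f f' : coindV H.subtype σ}
    (h₁ : (f : G → W) 1 = (f' : G → W) 1) (h₀ : (f : G → W) g₀ = (f' : G → W) g₀) : f = f' := by
  ext x
  by_cases hx : x ∈ H
  · rw [coindV_apply_of_mem σ f.2 hx, coindV_apply_of_mem σ f'.2 hx, h₁]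
  · rw [coindV_apply_of_notMem σ hH hg₀ f.2 hx, coindV_apply_of_notMem σ hH hg₀ f'.2 hx, h₀]

variable {U : Submodule k (coindV H.subtype σ)}
  (hU : ∀ g : G, ∀ f ∈ U, coind H.subtype σ g f ∈ U)
include hU

lemma map_coindEval_inf_ker_stable (h : H) (w : W)
    (hw : w ∈ (U ⊓ LinearMap.ker (coindEval σ 1)).map (coindEval σ g₀)) :
    σ h w ∈ (U ⊓ LinearMap.ker (coindEval σ 1)).map (coindEval σ g₀) := by
  obtain ⟨f, ⟨hfU, hf₁⟩, rfl⟩ := hw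
  have hc : g₀⁻¹ * h * g₀ ∈ H := (Subgroup.normal_of_index_eq_two hH).conj_mem' _ h.2 g₀
  refine ⟨coind H.subtype σ (g₀⁻¹ * h * g₀) f, ⟨hU _ f hfU, ?_⟩, ?_⟩
  · simp only [SetLike.mem_coe, LinearMap.mem_ker] at hf₁ ⊢
    rw [coindEval_one_equivariant σ ⟨_, hc⟩, hf₁, map_zero]
  · show (f : G → W) (g₀ * (g₀⁻¹ * h * g₀)) = σ h ((f : G → W) g₀)
    rw [show g₀ * (g₀⁻¹ * h * g₀) = h * g₀ by group]
    exact f.2 h g₀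

lemma eq_top_of_map_coindEval_inf_ker_eq_top (hg₀ : g₀ ∉ H)
    (hT : (U ⊓ LinearMap.ker (coindEval σ 1)).map (coindEval σ g₀) = ⊤) : U = ⊤ := by
  have hsurj : ∀ w, ∃ f ∈ U, (f : G → W) 1 = 0 ∧ (f : G → W) g₀ = w := fun w => by
    obtain ⟨f, ⟨hfU, hf₁⟩, hf₀⟩ := hT.ge (Submodule.mem_top (x := w))
    exact ⟨f, hfU, hf₁, hf₀⟩
  rw [Submodule.eq_top_iff']
  intro F
  let y : H := ⟨g₀⁻¹ * g₀⁻¹, Subgroup.mul_self_mem_of_index_two hH _⟩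
  obtain ⟨f₁, hf₁U, hf₁1, hf₁g₀⟩ := hsurj (σ y⁻¹ ((F : G → W) 1))
  obtain ⟨f₂, hf₂U, hf₂1, hf₂g₀⟩ := hsurj ((F : G → W) g₀)
  have hF : F = coind H.subtype σ g₀⁻¹ f₁ + f₂ := by
    refine coindV_ext_of_index_eq_two σ hH hg₀ ?_ ?_
    · show _ = (f₁ : G → W) (1 * g₀⁻¹) + (f₂ : G → W) 1
      rw [hf₂1, add_zero, show (1 : G) * g₀⁻¹ = y * g₀ by simp [y]]
      rw [coindV_apply_mul σ f₁.2, hf₁g₀, self_inv_apply]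
    · show _ = (f₁ : G → W) (g₀ * g₀⁻¹) + (f₂ : G → W) g₀
      rw [mul_inv_cancel, hf₁1, hf₂g₀, zero_add]
  rw [hF]
  exact add_mem (hU _ _ hf₁U) hf₂U

variable (hσ : ∀ U' : Submodule k W, (∀ h : H, ∀ w ∈ U', σ h w ∈ U') → U' = ⊥ ∨ U' = ⊤)
include hσ

lemma inf_ker_coindEval_one_eq_bot (hg₀ : g₀ ∉ H) (htop : U ≠ ⊤) :
    U ⊓ LinearMap.ker (coindEval σ 1) = ⊥ := by
  have hT : (U ⊓ LinearMap.ker (coindEval σ 1)).map (coindEval σ g₀) = ⊥ :=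
    (hσ _ (map_coindEval_inf_ker_stable σ hH hU)).resolve_right
      fun hT => htop (eq_top_of_map_coindEval_inf_ker_eq_top σ hH hU hg₀ hT)
  rw [Submodule.eq_bot_iff]
  intro f hf
  have h₀ : coindEval σ g₀ f = 0 := by
    rw [← Submodule.mem_bot k, ← hT]
    exact Submodule.mem_map_of_mem hf
  exact coindV_ext_of_index_eq_two σ hH hg₀ hf.2 h₀

lemma bijective_coindEval_one_comp_subtype (hg₀ : g₀ ∉ H) (hbot : U ≠ ⊥) (htop : U ≠ ⊤) :
    Function.Bijective (coindEval σ 1 ∘ₗ U.subtype) := by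
  have hinj : Function.Injective (coindEval σ 1 ∘ₗ U.subtype) := by
    refine (injective_iff_map_eq_zero _).mpr fun u hu => Subtype.ext ?_
    have hu' : (u : coindV H.subtype σ) ∈ U ⊓ LinearMap.ker (coindEval σ 1) := ⟨u.2, hu⟩
    rwa [inf_ker_coindEval_one_eq_bot σ hH hU hσ hg₀ htop, Submodule.mem_bot] at hu'
  refine ⟨hinj, LinearMap.range_eq_top.mp ((hσ _ ?_).resolve_left fun hrange => hbot ?_)⟩
  · rintro h _ ⟨u, rfl⟩
    exact ⟨⟨coind H.subtype σ h u, hU _ _ u.2⟩, coindEval_one_equivariant σ h u⟩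
  · rw [LinearMap.range_eq_bot] at hrange
    rw [Submodule.eq_bot_iff]
    intro f hf
    simpa using @hinj ⟨f, hf⟩ 0 (by rw [hrange, map_zero, LinearMap.zero_apply])

end IndexTwo

end Coinduced

end Representation

open Representation

theorem statement5_general {k G W : Type u} [Field k] [Group G] [AddCommGroup W] [Module k W]
    (H : Subgroup G) (hH : H.index = 2)
    (σ : Representation k H W)
    (hσ : Nontrivial W ∧
      ∀ U : Submodule k W, (∀ h : H, ∀ w ∈ U, σ h w ∈ U) → U = ⊥ ∨ U = ⊤) :
    ∃ (V : ModuleCat.{u} k) (ρ : Representation k G ↥V)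
      (Wsub Csub : Submodule k ↥V),
      -- `ρ` is an irreducible representation of `G`
      (Nontrivial ↥V ∧
        ∀ U : Submodule k ↥V, (∀ g : G, ∀ v ∈ U, ρ g v ∈ U) → U = ⊥ ∨ U = ⊤) ∧
      -- `Wsub` is an `H`-subrepresentation of `ρ|_H`
      (∀ h ∈ H, ∀ v ∈ Wsub, ρ h v ∈ Wsub) ∧
      -- with an `H`-stable complement `Csub`
      (∀ h ∈ H, ∀ v ∈ Csub, ρ h v ∈ Csub) ∧
      IsCompl Wsub Csub ∧
      -- `Wsub`, with its `H`-action, is isomorphic to `σ`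
      (∃ ι : W →ₗ[k] ↥V, Function.Injective ι ∧ LinearMap.range ι = Wsub ∧
        ∀ (h : H) (w : W), ι (σ h w) = ρ (h : G) (ι w)) := by
  obtain ⟨hW, hσ⟩ := hσ
  obtain ⟨g₀, hg₀⟩ : ∃ g₀, g₀ ∉ H := by
    by_contra! hall
    simp [(Subgroup.eq_top_iff' H).mpr hall] at hH
  by_cases hirr : ∀ U : Submodule k (coindV H.subtype σ),
      (∀ g : G, ∀ f ∈ U, coind H.subtype σ g f ∈ U) → U = ⊥ ∨ U = ⊤
  · have : Nontrivial (coindV H.subtype σ) :=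
      (leftInverse_coindEval_one_coindExtendByZero σ).injective.nontrivial
    obtain ⟨Wsub, Csub, hWsub, hCsub, hcompl, hι⟩ := isSummandOfRes_coind σ
    exact ⟨ModuleCat.of k _, coind H.subtype σ, Wsub, Csub, ⟨this, hirr⟩,
      hWsub, hCsub, hcompl, hι⟩
  · push Not at hirr
    obtain ⟨U, hU, hbot, htop⟩ := hirr
    let ρU := Subrepresentation.toRepresentation (⟨U, hU⟩ : Subrepresentation (coind H.subtype σ))
    let e := LinearEquiv.ofBijective _
      (bijective_coindEval_one_comp_subtype σ hH hU hσ hg₀ hbot htop)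
    have he : ∀ (h : H) (u : U), e (ρU h u) = σ h (e u) :=
      fun h u => coindEval_one_equivariant σ h u
    obtain ⟨Wsub, Csub, hWsub, hCsub, hcompl, hι⟩ :=
      isSummandOfRes_of_linearEquiv (V := U) (ρ := ρU) (σ := σ) e he
    exact ⟨ModuleCat.of k U, ρU, Wsub, Csub,
      ⟨Submodule.nontrivial_iff_ne_bot.mpr hbot, eq_bot_or_eq_top_of_linearEquiv e he hσ⟩,
      hWsub, hCsub, hcompl, hι⟩

/-- Every irreducible representation `σ` of `H` over `k` (`H` normal of
index 2 in `G`) is a direct summand of the restriction to `H` of some irreducible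
representation of `G`: there exist an irreducible `G`-representation `ρ` and an
`H`-subrepresentation of `ρ|_H` which is isomorphic to `σ` and admits an `H`-stable
complement in `ρ`. -/
theorem statement5 {k G W : Type u} [Field k] [Group G] [AddCommGroup W] [Module k W]
    (H : Subgroup G) [H.Normal] (hH : H.index = 2)
    (σ : Representation k H W)
    (hσ : Nontrivial W ∧
      ∀ U : Submodule k W, (∀ h : H, ∀ w ∈ U, σ h w ∈ U) → U = ⊥ ∨ U = ⊤) :
    ∃ (V : ModuleCat.{u} k) (ρ : Representation k G ↥V)
      (Wsub Csub : Submodule k ↥V),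
      -- `ρ` is an irreducible representation of `G`
      (Nontrivial ↥V ∧
        ∀ U : Submodule k ↥V, (∀ g : G, ∀ v ∈ U, ρ g v ∈ U) → U = ⊥ ∨ U = ⊤) ∧
      -- `Wsub` is an `H`-subrepresentation of `ρ|_H`
      (∀ h ∈ H, ∀ v ∈ Wsub, ρ h v ∈ Wsub) ∧
      -- with an `H`-stable complement `Csub`
      (∀ h ∈ H, ∀ v ∈ Csub, ρ h v ∈ Csub) ∧
      IsCompl Wsub Csub ∧
      -- `Wsub`, with its `H`-action, is isomorphic to `σ`
      (∃ ι : W →ₗ[k] ↥V, Function.Injective ι ∧ LinearMap.range ι = Wsub ∧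
        ∀ (h : H) (w : W), ι (σ h w) = ρ (h : G) (ι w)) :=
  statement5_general H hH σ hσ
end

section
/- Let P ∈ k[X,Y] be a homogeneous polynomial of degree d. Then P(a,b) = 0 for every pair (a,b) ∈ 𝔽_q × 𝔽_q with (a,b) ≠ (0,0) if and only if the polynomial X^q·Y − X·Y^q divides P in k[X,Y]. -/
/-!
Dehomogenize: `p(x) = P(x, 1)` satisfies `P = homogenize p d`. Vanishing at the points `(c, 1)`
says that every `c ∈ 𝔽_q` is a root of `p`, so `X^q - X ∣ p`; vanishing at `(1, 0)` says that the
coefficient of `x^d` in `p` is zero, so `deg p < d`. Homogenizing `p = (X^q - X) * g` back in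
degree `d` then exhibits the factor `homogenize (X^q - X) (q + 1) = X^q Y - X Y^q`.
-/

open MvPolynomial

namespace Polynomial

theorem X_pow_card_sub_X_dvd_of_eval_algebraMap_eq_zero {F K : Type*} [Field F] [Fintype F]
    [CommRing K] [IsDomain K] [Algebra F K] {p : K[X]}
    (h : ∀ c : F, p.eval (algebraMap F K c) = 0) : (X ^ Fintype.card F - X : K[X]) ∣ p := by
  have hq : 1 < Fintype.card F := Fintype.one_lt_card
  have hmonic : (X ^ Fintype.card F - X : K[X]).Monic :=
    monic_X_pow_sub (by rw [degree_X]; exact_mod_cast hq)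
  have hdeg : (X ^ Fintype.card F - X : K[X]).natDegree = Fintype.card F := by
    rw [natDegree_sub_eq_left_of_natDegree_lt] <;> simp [hq]
  have hne_one : (X ^ Fintype.card F - X : K[X]) ≠ 1 := fun h1 => by
    rw [h1, natDegree_one] at hdeg
    omega
  -- the remainder modulo `X^q - X` has degree `< q` but vanishes at the `q` elements of `F`
  rw [← modByMonic_eq_zero_iff_dvd hmonic]
  refine eq_zero_of_natDegree_lt_card_of_eval_eq_zero _ (algebraMap F K).injective (fun c => ?_)
    ((natDegree_modByMonic_lt p hmonic hne_one).trans_eq hdeg)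
  rw [modByMonic_eq_sub_mul_div]
  simp [h c, ← map_pow, FiniteField.pow_card]

lemma eval_homogenize_one_zero {R : Type*} [CommSemiring R] (p : R[X]) (n : ℕ) :
    MvPolynomial.eval ![1, 0] (p.homogenize n) = p.coeff n := by
  simp only [homogenize, map_sum, MvPolynomial.eval_monomial]
  rw [Finset.sum_eq_single (n, 0)]
  · simp
  · intro b hb hne
    rw [Finset.HasAntidiagonal.mem_antidiagonal] at hb
    have : b.2 ≠ 0 := fun h => hne (Prod.ext (by omega) h)
    simp [this]
  · simp

lemma homogenize_X_pow_sub_X {R : Type*} [CommRing R] (q : ℕ) :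
    (X ^ q - X : R[X]).homogenize (q + 1) = .X 0 ^ q * .X 1 - .X 0 * .X 1 ^ q := by
  simp

lemma homogenize_dvd_homogenize_of_degree_lt {R : Type*} [CommSemiring R] [NoZeroDivisors R]
    {f p : R[X]} {m n : ℕ} (hf : f.natDegree = m) (hfp : f ∣ p) (hp : p.degree < n) :
    f.homogenize (m + 1) ∣ p.homogenize n := by
  obtain ⟨g, rfl⟩ := hfp
  rcases eq_or_ne (f * g) 0 with h0 | h0
  · simp [h0]
  obtain ⟨hf0, hg0⟩ := mul_ne_zero_iff.mp h0
  have hlt : f.natDegree + g.natDegree < n := by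
    rwa [← natDegree_mul hf0 hg0, natDegree_lt_iff_degree_lt h0]
  obtain ⟨e, rfl⟩ : ∃ e, n = (m + 1) + e := ⟨n - (m + 1), by omega⟩
  rw [homogenize_mul f g (by omega) (by omega : g.natDegree ≤ e)]
  exact dvd_mul_right _ _

end Polynomial

/-- Let `F` be the field with `q` elements, `k` a field which is an
`F`-algebra, and `P ∈ k[X,Y]` a homogeneous polynomial of degree `d`. Then `P` vanishes
at every point `(a, b) ∈ F × F` with `(a, b) ≠ (0, 0)` if and only if
`X^q·Y − X·Y^q` divides `P` in `k[X,Y]`. -/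
theorem statement8 {F k : Type*} [Field F] [Fintype F] [Field k] [Algebra F k]
    {q : ℕ} (hq : Fintype.card F = q) {d : ℕ}
    (P : MvPolynomial (Fin 2) k) (hP : P.IsHomogeneous d) :
    (∀ a b : F, (a, b) ≠ (0, 0) →
        eval ![algebraMap F k a, algebraMap F k b] P = 0) ↔
      (X 0 ^ q * X 1 - X 0 * X 1 ^ q : MvPolynomial (Fin 2) k) ∣ P := by
  subst hq
  constructor
  · intro h
    set p : Polynomial k := aeval ![Polynomial.X, 1] P
    have hP_eq : p.homogenize d = P := Polynomial.homogenize_eq_of_isHomogeneous hP rfl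
    have hdeg : p.natDegree ≤ d := by
      simpa using aeval_natDegree_le P hP.totalDegree_le _ (n := 1) (by simp [Fin.forall_fin_two])
    have hroot (c : F) : p.eval (algebraMap F k c) = 0 := by
      simpa [← hP_eq, Polynomial.eval_homogenize hdeg] using h c 1 (by simp)
    have hcoeff : p.coeff d = 0 := by
      simpa [← hP_eq, Polynomial.eval_homogenize_one_zero] using h 1 0 (by simp)
    have hlt : p.degree < d := by
      refine Polynomial.degree_lt_iff_coeff_zero _ _ |>.mpr fun m hm => ?_
      rcases hm.eq_or_lt with rfl | hm
      exacts [hcoeff, Polynomial.coeff_eq_zero_of_natDegree_lt (hdeg.trans_lt hm)]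
    rw [← hP_eq, ← Polynomial.homogenize_X_pow_sub_X]
    exact Polynomial.homogenize_dvd_homogenize_of_degree_lt
      (FiniteField.X_pow_card_sub_X_natDegree_eq k Fintype.one_lt_card)
      (Polynomial.X_pow_card_sub_X_dvd_of_eval_algebraMap_eq_zero hroot) hlt
  · rintro ⟨Q, rfl⟩ a b -
    have hfrob (x : F) : algebraMap F k x ^ Fintype.card F = algebraMap F k x := by
      rw [← map_pow, FiniteField.pow_card]
    simp [hfrob]
end

section
/- Let d ≥ q+1. The set of homogeneous polynomials P ∈ k[X,Y] of degree d satisfying P(a,b) = 0 for every pair (a,b) ∈ 𝔽_q × 𝔽_q with (a,b) ≠ (0,0) is exactly the set of products (X^q·Y − X·Y^q)·Q where Q ranges over the homogeneous polynomials of degree d − q − 1; as a k-vector space it has dimension d − q. -/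
/-!
Dehomogenizing at `Y = 1` identifies forms of degree `n` in `k[X,Y]` with polynomials of degree
at most `n` in `k[X]`, so the forms of degree `n` have dimension `n + 1`. If a form `P` of degree
`d` vanishes on `𝔽_q² \ {0}`, its dehomogenization `p` vanishes on `𝔽_q` (the points
`(a, 1)`) and has no `X^d` term (the point `(1, 0)`). Hence `X^q - X ∣ p` with a cofactor of
degree at most `d - q - 1`, and rehomogenizing gives `P = (X^q Y - X Y^q) Q`. Multiplication by
the nonzero form `X^q Y - X Y^q` is injective, so the dimension is `d - q`.
-/

open MvPolynomial

/-- The `k`-subspace of `k[X,Y]` consisting of homogeneous polynomials of degree `d`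
vanishing at every point `(a, b) ∈ F × F` with `(a, b) ≠ (0, 0)`. -/
noncomputable def vanishingSubmodule (F k : Type*) [Field F] [Fintype F] [Field k]
    [Algebra F k] (d : ℕ) : Submodule k (MvPolynomial (Fin 2) k) where
  carrier := {P | P.IsHomogeneous d ∧ ∀ a b : F, (a, b) ≠ (0, 0) →
      eval ![algebraMap F k a, algebraMap F k b] P = 0}
  add_mem' := by
    rintro P Q ⟨hP, hPv⟩ ⟨hQ, hQv⟩
    exact ⟨hP.add hQ, fun a b hab => by simp [hPv a b hab, hQv a b hab]⟩
  zero_mem' := ⟨isHomogeneous_zero _ _ _, fun a b hab => by simp⟩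
  smul_mem' := by
    rintro c P ⟨hP, hPv⟩
    refine ⟨?_, fun a b hab => by simp [hPv a b hab]⟩
    rw [smul_eq_C_mul]
    simpa using (isHomogeneous_C (Fin 2) c).mul hP

namespace Polynomial

section CommSemiring

variable {R : Type*} [CommSemiring R]

lemma eval_one_zero_homogenize (p : R[X]) (n : ℕ) :
    MvPolynomial.eval ![1, 0] (p.homogenize n) = p.coeff n := by
  rw [homogenize, map_sum, Finset.sum_eq_single (n, 0)]
  · simp [MvPolynomial.eval_monomial, Finsupp.prod_fintype]
  · rintro ⟨i, j⟩ hij hne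
    have hj : j ≠ 0 := by
      rintro rfl
      simp_all
    simp [MvPolynomial.eval_monomial, Finsupp.prod_fintype, hj]
  · simp

end CommSemiring

lemma X_pow_card_sub_X_dvd_of_eval_eq_zero {F k : Type*} [Field F] [Fintype F] [Field k]
    [Algebra F k] {p : k[X]} (hp : ∀ a : F, p.eval (algebraMap F k a) = 0) :
    X ^ Fintype.card F - X ∣ p := by
  have hq : 1 < Fintype.card F := Fintype.one_lt_card
  set f : k[X] := X ^ Fintype.card F - X
  have hf : f.Monic := monic_X_pow_sub (by rw [degree_X]; exact_mod_cast hq)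
  have hfF : ∀ a : F, f.eval (algebraMap F k a) = 0 := fun a => by
    simp [f, ← map_pow, FiniteField.pow_card]
  rw [← modByMonic_eq_zero_iff_dvd hf]
  refine eq_zero_of_natDegree_lt_card_of_eval_eq_zero _ (algebraMap F k).injective
    (fun a => ?_) ?_
  · simp [modByMonic_eq_sub_mul_div p f, hp, hfF]
  · have hfdeg : f.natDegree = Fintype.card F := FiniteField.X_pow_card_sub_X_natDegree_eq k hq
    calc (p %ₘ f).natDegree < f.natDegree :=
          natDegree_modByMonic_lt p hf (fun h => by simp [h] at hfdeg; omega)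
      _ = Fintype.card F := hfdeg

end Polynomial

namespace MvPolynomial

open scoped Polynomial

open Polynomial (homogenize)

section CommSemiring

variable {R : Type*} [CommSemiring R] {n : ℕ} {P : MvPolynomial (Fin 2) R}

lemma IsHomogeneous.natDegree_aeval_X_one_le (hP : P.IsHomogeneous n) :
    (MvPolynomial.aeval ![(Polynomial.X : R[X]), 1] P).natDegree ≤ n := by
  rw [P.as_sum, map_sum]
  refine Polynomial.natDegree_sum_le_of_forall_le _ _ fun m hm => ?_
  rw [aeval_monomial, Finsupp.prod_fintype _ _ (by simp)]
  refine (Polynomial.natDegree_C_mul_le _ _).trans ?_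
  have hm : m 0 + m 1 = n := by
    simpa [Finsupp.weight_apply, Finsupp.sum_fintype, Fin.sum_univ_two] using
      hP (mem_support_iff.mp hm)
  simp only [Fin.prod_univ_two, Matrix.cons_val_zero, Matrix.cons_val_one, one_pow, mul_one]
  exact (Polynomial.natDegree_X_pow_le _).trans (by omega)

lemma IsHomogeneous.homogenize_aeval_X_one (hP : P.IsHomogeneous n) :
    (MvPolynomial.aeval ![(Polynomial.X : R[X]), 1] P).homogenize n = P :=
  Polynomial.homogenize_eq_of_isHomogeneous hP rfl

variable (R) in
noncomputable def homogeneousSubmoduleFinTwoEquivDegreeLT (n : ℕ) :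
    homogeneousSubmodule (Fin 2) R n ≃ₗ[R] Polynomial.degreeLT R (n + 1) where
  toFun P := ⟨aeval ![Polynomial.X, 1] P.1, by
    rw [Polynomial.degreeLT_succ_eq_degreeLE, Polynomial.mem_degreeLE]
    exact Polynomial.degree_le_of_natDegree_le
      (IsHomogeneous.natDegree_aeval_X_one_le P.2)⟩
  invFun p := ⟨p.1.homogenize n, Polynomial.isHomogeneous_homogenize _⟩
  map_add' P Q := by ext1; simp
  map_smul' c P := by ext1; simp
  left_inv P := Subtype.ext (IsHomogeneous.homogenize_aeval_X_one P.2)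
  right_inv := by
    rintro ⟨p, hp⟩
    rw [Polynomial.degreeLT_succ_eq_degreeLE, Polynomial.mem_degreeLE] at hp
    exact Subtype.ext
      (Polynomial.aeval_homogenize_X_one _ (Polynomial.natDegree_le_of_degree_le hp))

end CommSemiring

lemma finrank_homogeneousSubmodule_fin_two (K : Type*) [Field K] (n : ℕ) :
    Module.finrank K (homogeneousSubmodule (Fin 2) K n) = n + 1 := by
  rw [(homogeneousSubmoduleFinTwoEquivDegreeLT K n).finrank_eq,
    (Polynomial.degreeLTEquiv K (n + 1)).finrank_eq, Module.finrank_fin_fun]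

lemma isHomogeneous_X_pow_mul_X_sub_X_mul_X_pow (R : Type*) [CommRing R] (q : ℕ) :
    (X 0 ^ q * X 1 - X 0 * X 1 ^ q : MvPolynomial (Fin 2) R).IsHomogeneous (q + 1) :=
  Polynomial.homogenize_X_pow_sub_X (R := R) q ▸ Polynomial.isHomogeneous_homogenize _

section Vanishing

variable {F k : Type*} [Field F] [Fintype F] [Field k] [Algebra F k]

lemma eval_X_pow_card_mul_X_sub_X_mul_X_pow_card (a b : F) :
    eval ![algebraMap F k a, algebraMap F k b]
      (X 0 ^ Fintype.card F * X 1 - X 0 * X 1 ^ Fintype.card F) = 0 := by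
  simp only [map_sub, map_mul, map_pow, eval_X, Matrix.cons_val_zero, Matrix.cons_val_one]
  rw [← map_pow, ← map_pow, FiniteField.pow_card, FiniteField.pow_card, sub_self]

lemma exists_eq_mul_of_mem_vanishingSubmodule {d : ℕ} (hd : Fintype.card F + 1 ≤ d)
    {P : MvPolynomial (Fin 2) k} (hP : P ∈ vanishingSubmodule F k d) :
    ∃ Q : MvPolynomial (Fin 2) k, Q.IsHomogeneous (d - Fintype.card F - 1) ∧
      P = (X 0 ^ Fintype.card F * X 1 - X 0 * X 1 ^ Fintype.card F) * Q := by
  obtain ⟨hPd, hPv⟩ := hP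
  set p := aeval ![(Polynomial.X : k[X]), 1] P
  have hPp : p.homogenize d = P := hPd.homogenize_aeval_X_one
  have hpd : p.natDegree ≤ d := hPd.natDegree_aeval_X_one_le
  have hp_lt : p.natDegree ≤ d - 1 := by
    refine Polynomial.natDegree_le_pred hpd ?_
    rw [← Polynomial.eval_one_zero_homogenize, hPp]
    simpa using hPv 1 0 (by simp)
  have hpF : ∀ a : F, p.eval (algebraMap F k a) = 0 := fun a => by
    have h1 := Polynomial.eval_homogenize hpd ![algebraMap F k a, 1] one_ne_zero
    have h2 := hPv a 1 (by simp)
    rw [map_one] at h2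
    rw [hPp] at h1
    simpa [h2] using h1.symm
  obtain ⟨h, hph⟩ := Polynomial.X_pow_card_sub_X_dvd_of_eval_eq_zero hpF
  set q := Fintype.card F
  have hq : 1 < q := Fintype.one_lt_card
  have hhd : h.natDegree ≤ d - q - 1 := by
    rcases eq_or_ne h 0 with rfl | hh
    · simp
    have := Polynomial.natDegree_mul (FiniteField.X_pow_card_sub_X_ne_zero k hq) hh
    rw [FiniteField.X_pow_card_sub_X_natDegree_eq k hq, ← hph] at this
    omega
  refine ⟨h.homogenize (d - q - 1), Polynomial.isHomogeneous_homogenize _, ?_⟩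
  rw [← hPp, hph, ← Polynomial.homogenize_X_pow_sub_X,
    ← Polynomial.homogenize_mul _ _
      ((FiniteField.X_pow_card_sub_X_natDegree_eq k hq).le.trans q.le_succ) hhd]
  congr 1
  omega

lemma mem_vanishingSubmodule_iff {d : ℕ} (hd : Fintype.card F + 1 ≤ d)
    {P : MvPolynomial (Fin 2) k} :
    P ∈ vanishingSubmodule F k d ↔ ∃ Q : MvPolynomial (Fin 2) k,
      Q.IsHomogeneous (d - Fintype.card F - 1) ∧
        P = (X 0 ^ Fintype.card F * X 1 - X 0 * X 1 ^ Fintype.card F) * Q := by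
  refine ⟨exists_eq_mul_of_mem_vanishingSubmodule hd, ?_⟩
  rintro ⟨Q, hQ, rfl⟩
  refine ⟨?_, fun a b _ => by
    rw [map_mul, eval_X_pow_card_mul_X_sub_X_mul_X_pow_card, zero_mul]⟩
  have := (isHomogeneous_X_pow_mul_X_sub_X_mul_X_pow k (Fintype.card F)).mul hQ
  rwa [show Fintype.card F + 1 + (d - Fintype.card F - 1) = d by omega] at this

lemma vanishingSubmodule_eq_map {d : ℕ} (hd : Fintype.card F + 1 ≤ d) :
    vanishingSubmodule F k d = (homogeneousSubmodule (Fin 2) k (d - Fintype.card F - 1)).map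
      (LinearMap.mulLeft k (X 0 ^ Fintype.card F * X 1 - X 0 * X 1 ^ Fintype.card F)) := by
  ext P
  rw [mem_vanishingSubmodule_iff hd, Submodule.mem_map]
  simp only [mem_homogeneousSubmodule, LinearMap.mulLeft_apply, eq_comm]

lemma finrank_vanishingSubmodule {d : ℕ} (hd : Fintype.card F + 1 ≤ d) :
    Module.finrank k (vanishingSubmodule F k d) = d - Fintype.card F := by
  have hq : 1 < Fintype.card F := Fintype.one_lt_card
  have hD : (X 0 ^ Fintype.card F * X 1 - X 0 * X 1 ^ Fintype.card F :
      MvPolynomial (Fin 2) k) ≠ 0 := by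
    rw [← Polynomial.homogenize_X_pow_sub_X, Ne, Polynomial.homogenize_eq_zero_iff
      ((FiniteField.X_pow_card_sub_X_natDegree_eq k hq).le.trans (Nat.le_succ _))]
    exact FiniteField.X_pow_card_sub_X_ne_zero k hq
  rw [vanishingSubmodule_eq_map hd, ← LinearEquiv.finrank_eq
    (Submodule.equivMapOfInjective _ (mul_right_injective₀ hD) _),
    finrank_homogeneousSubmodule_fin_two]
  omega

end Vanishing

end MvPolynomial

/-- Let `F` be the field with `q` elements, `k` a field which is an
`F`-algebra, and `d ≥ q + 1`. The set of homogeneous polynomials `P ∈ k[X,Y]` of degree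
`d` vanishing at every `(a, b) ∈ F × F` with `(a, b) ≠ (0, 0)` is exactly the set of
products `(X^q·Y − X·Y^q)·Q` with `Q` homogeneous of degree `d − q − 1`; as a
`k`-vector space it has dimension `d − q`. -/
theorem statement10 {F k : Type*} [Field F] [Fintype F] [Field k] [Algebra F k]
    {q d : ℕ} (hq : Fintype.card F = q) (hd : q + 1 ≤ d) :
    (∀ P : MvPolynomial (Fin 2) k,
        (P.IsHomogeneous d ∧ ∀ a b : F, (a, b) ≠ (0, 0) →
            eval ![algebraMap F k a, algebraMap F k b] P = 0) ↔
          ∃ Q : MvPolynomial (Fin 2) k, Q.IsHomogeneous (d - q - 1) ∧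
            P = (X 0 ^ q * X 1 - X 0 * X 1 ^ q) * Q) ∧
    Module.finrank k ↥(vanishingSubmodule F k d) = d - q := by
  subst hq
  exact ⟨fun _ => mem_vanishingSubmodule_iff hd, finrank_vanishingSubmodule hd⟩
end

section
/- Let g ∈ GL₂(𝔽_q) and let g act on k[X,Y] by the k-algebra homomorphism sending X to g₁₁·X + g₂₁·Y and Y to g₁₂·X + g₂₂·Y, where the matrix entries are viewed in k via the embedding 𝔽_q ⊆ k. Then g·(X^q·Y − X·Y^q) = det(g)·(X^q·Y − X·Y^q). -/
open MvPolynomial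

/-! The `q`-th power map is an `𝔽_q`-algebra endomorphism of any `𝔽_q`-algebra (Frobenius),
so substituting linear forms `u = aX + cY`, `v = bX + dY` gives
`u^q v - u v^q = (aX^q + cY^q)(bX + dY) - (aX + cY)(bX^q + dY^q) = (ad - bc)(X^q Y - X Y^q)`. -/

section LinearSubstitution

variable {F R : Type*} [Field F] [Fintype F] [CommRing R] [Algebra F R]

theorem FiniteField.pow_card_algebraMap_mul_add (a b : F) (x y : R) :
    (algebraMap F R a * x + algebraMap F R b * y) ^ Fintype.card F =
      algebraMap F R a * x ^ Fintype.card F + algebraMap F R b * y ^ Fintype.card F := by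
  simpa only [map_add, map_mul, AlgHom.commutes, FiniteField.coe_frobeniusAlgHom] using
    congrFun (FiniteField.coe_frobeniusAlgHom F R).symm
      (algebraMap F R a * x + algebraMap F R b * y)

theorem FiniteField.pow_card_mul_sub_mul_pow_card_linear_subst
    (M : Matrix (Fin 2) (Fin 2) F) (x y : R) :
    let u := algebraMap F R (M 0 0) * x + algebraMap F R (M 1 0) * y
    let v := algebraMap F R (M 0 1) * x + algebraMap F R (M 1 1) * y
    u ^ Fintype.card F * v - u * v ^ Fintype.card F =
      algebraMap F R M.det * (x ^ Fintype.card F * y - x * y ^ Fintype.card F) := by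
  intro u v
  simp only [u, v, pow_card_algebraMap_mul_add, Matrix.det_fin_two, map_sub, map_mul]
  ring

end LinearSubstitution

/-- Let `F` be the field with `q` elements, `k` a field which is an
`F`-algebra and `g ∈ GL₂(F)`. Let `g` act on `k[X,Y]` by the `k`-algebra homomorphism
sending `X ↦ g₁₁·X + g₂₁·Y` and `Y ↦ g₁₂·X + g₂₂·Y` (entries viewed in `k`). Then
`g·(X^q·Y − X·Y^q) = det(g)·(X^q·Y − X·Y^q)`. -/
theorem statement12 {F k : Type*} [Field F] [Fintype F] [Field k] [Algebra F k]
    {q : ℕ} (hq : Fintype.card F = q)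
    (g : GL (Fin 2) F) :
    aeval
      ![C (algebraMap F k ((g : Matrix (Fin 2) (Fin 2) F) 0 0)) * X 0 +
          C (algebraMap F k ((g : Matrix (Fin 2) (Fin 2) F) 1 0)) * X 1,
        C (algebraMap F k ((g : Matrix (Fin 2) (Fin 2) F) 0 1)) * X 0 +
          C (algebraMap F k ((g : Matrix (Fin 2) (Fin 2) F) 1 1)) * X 1]
      ((X 0 ^ q * X 1 - X 0 * X 1 ^ q : MvPolynomial (Fin 2) k))
    = C (algebraMap F k (g : Matrix (Fin 2) (Fin 2) F).det) *
        (X 0 ^ q * X 1 - X 0 * X 1 ^ q) := by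
  subst hq
  simp only [map_sub, map_mul, map_pow, aeval_X, Matrix.cons_val_zero, Matrix.cons_val_one,
    ← MvPolynomial.algebraMap_apply]
  exact FiniteField.pow_card_mul_sub_mul_pow_card_linear_subst (g : Matrix (Fin 2) (Fin 2) F) _ _
end

section
/- Let A be the localization of the ring k[X,Y]/(XY) away from the image of (X^{q−1} − 1)(Y^{q−1} − 1). For each b ∈ 𝔽_q^× the images of X − b and of Y − b in A are units, and the group homomorphism from k^× × (𝔽_q^× → ℤ) × (𝔽_q^× → ℤ) to A^× sending (c, m, n) to c · ∏_{b ∈ 𝔽_q^×} (X − b)^{m(b)} · ∏_{b ∈ 𝔽_q^×} (Y − b)^{n(b)} is an isomorphism of abelian groups. -/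
/-!
Restricting to the two axes maps `k[X,Y]/(XY)` injectively into `k[X] × k[Y]`, and after
inverting `f = ∏ (X - b) · ∏ (Y - b)` this gives an injective map `A → k(X) × k(Y)`. The
`X`-component of a unit of `A` (written as `π p / f ^ N`) comes from a divisor of a power of
`∏ (X - b)`, hence is `c · ∏ (X - b) ^ m b`, and likewise for `Y`; the constants on the two axes
are linked through the common value at the origin, which produces the preimage `(c, m, n)`.
Injectivity is unique factorisation in `k(X)`: `c · ∏ (X - b) ^ e b = 1` forces `c = 1`, `e = 0`.
The finite field only enters through `∏_{b ∈ 𝔽_q^×} (X - b) = X ^ (q - 1) - 1`; the argument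
works for any finite family of distinct nonzero points `r i` in place of `𝔽_q^×`.
-/

section SplitPolynomial
open Polynomial

variable {k ι : Type*} [Field k] [Fintype ι] {r : ι → k}

theorem rootMultiplicity_prod_X_sub_C_pow (hr : r.Injective) (e : ι → ℕ) (i : ι) :
    rootMultiplicity (r i) (∏ j, (X - C (r j)) ^ e j) = e i := by
  classical
  rw [← count_roots, roots_prod _ _ (Finset.prod_ne_zero_iff.2 fun j _ =>
    pow_ne_zero _ (X_sub_C_ne_zero _))]
  simp [Multiset.count_bind, Multiset.count_singleton, hr.eq_iff]

theorem exists_eq_C_mul_prod_X_sub_C_pow_of_dvd {p : k[X]} (hp : p ≠ 0) {T : ℕ}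
    (hdvd : p ∣ (∏ i, (X - C (r i))) ^ T) :
    ∃ c ≠ 0, ∃ e : ι → ℕ, p = C c * ∏ i, (X - C (r i)) ^ e i := by
  classical
  have hg : (∏ i, (X - C (r i))) ^ T ≠ 0 :=
    pow_ne_zero _ (Finset.prod_ne_zero_iff.2 fun i _ => X_sub_C_ne_zero _)
  have hsplit : p.Splits :=
    ((Splits.prod fun i _ => Splits.X_sub_C (r i)).pow T).of_dvd hg hdvd
  have hroots : ∀ a ∈ p.roots, a ∈ Set.range r := by
    intro a ha
    have := (mem_roots hg).1 (Multiset.mem_of_le (roots.le_of_dvd hg hdvd) ha)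
    rw [IsRoot.def, eval_pow, eval_prod] at this
    obtain ⟨i, -, hi⟩ := Finset.prod_eq_zero_iff.1 (eq_zero_of_pow_eq_zero this)
    exact ⟨i, by simpa [sub_eq_zero, eq_comm] using hi⟩
  set s := p.roots.attach.map fun a => (hroots a.1 a.2).choose
  have hs : s.map r = p.roots := by
    rw [Multiset.map_map]
    conv_rhs => rw [← Multiset.attach_map_val p.roots]
    exact Multiset.map_congr rfl fun a _ => (hroots a.1 a.2).choose_spec
  refine ⟨p.leadingCoeff, leadingCoeff_ne_zero.2 hp, s.count, ?_⟩
  conv_lhs => rw [hsplit.eq_prod_roots, ← hs, Multiset.map_map]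
  rw [Finset.prod_multiset_map_count]
  exact congrArg _ (Finset.prod_subset (Finset.subset_univ _) fun i _ hi => by
    rw [Multiset.count_eq_zero.2 (by simpa using hi), pow_zero])

theorem eq_one_of_C_mul_prod_X_sub_C_zpow_eq_one (hr : r.Injective) {γ : k} {e : ι → ℤ}
    (h : RatFunc.C γ * ∏ i, (RatFunc.X - RatFunc.C (r i)) ^ e i = 1) : γ = 1 ∧ e = 0 := by
  set ξ : ι → RatFunc k := fun i => RatFunc.X - RatFunc.C (r i)
  have hξ (i : ι) : ξ i = algebraMap k[X] (RatFunc k) (X - C (r i)) := by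
    simp [ξ, RatFunc.algebraMap_X, RatFunc.algebraMap_C]
  have hξ0 (i : ι) : ξ i ≠ 0 := hξ i ▸ RatFunc.algebraMap_ne_zero (X_sub_C_ne_zero _)
  have hpoly : C γ * ∏ i, (X - C (r i)) ^ (e i).toNat = ∏ i, (X - C (r i)) ^ (-e i).toNat := by
    apply RatFunc.algebraMap_injective k
    simp only [map_mul, map_prod, map_pow, RatFunc.algebraMap_C, ← hξ]
    rw [← div_eq_one_iff_eq (Finset.prod_ne_zero_iff.2 fun i _ => pow_ne_zero _ (hξ0 i)),
      mul_div_assoc, ← Finset.prod_div_distrib, ← h]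
    congr 2 with i
    rw [← zpow_natCast, ← zpow_natCast, ← zpow_sub₀ (hξ0 i), Int.toNat_sub_toNat_neg]
  have hprod (d : ι → ℕ) : ∏ i, (X - C (r i)) ^ d i ≠ 0 :=
    Finset.prod_ne_zero_iff.2 fun i _ => pow_ne_zero _ (X_sub_C_ne_zero _)
  have hγ : γ ≠ 0 := by
    rintro rfl
    exact hprod _ (by simpa using hpoly.symm)
  have he : e = 0 := funext fun i => by
    have := congrArg (rootMultiplicity (r i)) hpoly
    rw [rootMultiplicity_mul (mul_ne_zero (C_ne_zero.2 hγ) (hprod _)), rootMultiplicity_C,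
      zero_add, rootMultiplicity_prod_X_sub_C_pow hr, rootMultiplicity_prod_X_sub_C_pow hr] at this
    simp only [Pi.zero_apply]
    omega
  subst he
  simp only [Pi.zero_apply, zpow_zero, Finset.prod_const_one, mul_one] at h
  exact ⟨RatFunc.C_injective (h.trans (map_one _).symm), rfl⟩

end SplitPolynomial

open MvPolynomial
open scoped Polynomial

theorem MvPolynomial.X_dvd_sub_aeval_update_zero {σ R : Type*} [CommRing R] [DecidableEq σ]
    (i : σ) (p : MvPolynomial σ R) : X i ∣ p - aeval (Function.update X i 0) p := by
  rw [← Ideal.mem_span_singleton, ← Ideal.Quotient.eq]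
  have : (Ideal.Quotient.mkₐ R (Ideal.span {X i})).comp (AlgHom.id R _) =
      (Ideal.Quotient.mkₐ R _).comp (aeval (Function.update X i 0)) := by
    refine algHom_ext fun j => ?_
    rcases eq_or_ne j i with rfl | hj
    · simp
    · simp [Function.update_of_ne hj]
  exact congr($this p)

section Axes

variable (k : Type*) [CommRing k]

noncomputable def toXAxis : MvPolynomial (Fin 2) k →ₐ[k] k[X] := aeval ![Polynomial.X, 0]

noncomputable def toYAxis : MvPolynomial (Fin 2) k →ₐ[k] k[X] := aeval ![0, Polynomial.X]

variable {k}

@[simp] theorem toXAxis_X_zero : toXAxis k (X 0) = Polynomial.X := by simp [toXAxis]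
@[simp] theorem toXAxis_X_one : toXAxis k (X 1) = 0 := by simp [toXAxis]
@[simp] theorem toYAxis_X_zero : toYAxis k (X 0) = 0 := by simp [toYAxis]
@[simp] theorem toYAxis_X_one : toYAxis k (X 1) = Polynomial.X := by simp [toYAxis]

theorem X_zero_mul_X_one_dvd {p : MvPolynomial (Fin 2) k} (hX : toXAxis k p = 0)
    (hY : toYAxis k p = 0) : X 0 * X 1 ∣ p := by
  have restrictX :
      aeval (Function.update (X (R := k)) 1 0) = (Polynomial.aeval (X 0)).comp (toXAxis k) :=
    algHom_ext fun i => by fin_cases i <;> simp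
  have restrictY :
      aeval (Function.update (X (R := k)) 0 0) = (Polynomial.aeval (X 1)).comp (toYAxis k) :=
    algHom_ext fun i => by fin_cases i <;> simp
  obtain ⟨q, rfl⟩ : X 1 ∣ p := by
    simpa [restrictX, hX] using X_dvd_sub_aeval_update_zero 1 p
  have hq : toYAxis k q = 0 := by
    rwa [map_mul, toYAxis_X_one, Polynomial.isRegular_X.left.mul_left_eq_zero_iff] at hY
  obtain ⟨s, rfl⟩ : X 0 ∣ q := by
    simpa [restrictY, hq] using X_dvd_sub_aeval_update_zero 0 q
  exact ⟨s, by ring⟩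

theorem eval_zero_toXAxis (p : MvPolynomial (Fin 2) k) :
    (toXAxis k p).eval 0 = (toYAxis k p).eval 0 := by
  have : (Polynomial.aeval (0 : k)).comp (toXAxis k) = (Polynomial.aeval 0).comp (toYAxis k) :=
    algHom_ext fun i => by fin_cases i <;> simp
  simpa using congr($this p)

end Axes

section Localization

variable {k S A R : Type*} [Field k] [CommRing S] [CommRing A] [Algebra S A] [CommRing R]
  {π : MvPolynomial (Fin 2) k →+* S} (hπ : Function.Surjective π)
  (hker : RingHom.ker π = Ideal.span {X 0 * X 1})
include hπ hker

theorem exists_ringHom_algebraMap_comp_eq (f : MvPolynomial (Fin 2) k)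
    [IsLocalization.Away (π f) A] (ψ : MvPolynomial (Fin 2) k →+* R) (hψ : ψ (X 0 * X 1) = 0)
    (hf : IsUnit (ψ f)) : ∃ Φ : A →+* R, ∀ p, Φ (algebraMap S A (π p)) = ψ p := by
  have hle : RingHom.ker π ≤ RingHom.ker ψ := by
    rwa [hker, Ideal.span_le, Set.singleton_subset_iff]
  set ψ' := π.liftOfSurjective hπ ⟨ψ, hle⟩
  have hψ' (p : MvPolynomial (Fin 2) k) : ψ' (π p) = ψ p := π.liftOfSurjective_comp_apply hπ _ p
  refine ⟨IsLocalization.Away.lift (π f) (g := ψ') (hψ' f ▸ hf), fun p => ?_⟩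
  rw [IsLocalization.Away.lift_eq, hψ']

theorem eq_of_toXAxis_eq_of_toYAxis_eq (f : MvPolynomial (Fin 2) k)
    [IsLocalization.Away (π f) A] {ΦX ΦY : A →+* RatFunc k}
    (hΦX : ∀ p, ΦX (algebraMap S A (π p)) = algebraMap k[X] (RatFunc k) (toXAxis k p))
    (hΦY : ∀ p, ΦY (algebraMap S A (π p)) = algebraMap k[X] (RatFunc k) (toYAxis k p))
    {a b : A} (hX : ΦX a = ΦX b) (hY : ΦY a = ΦY b) : a = b := by
  rw [← sub_eq_zero]
  obtain ⟨N, s, hs⟩ := IsLocalization.Away.surj (π f) (a - b)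
  obtain ⟨p, rfl⟩ := hπ s
  have hp : π p = 0 := by
    rw [← RingHom.mem_ker, hker, Ideal.mem_span_singleton]
    apply X_zero_mul_X_one_dvd <;> apply RatFunc.algebraMap_injective k
    · rw [← hΦX, ← hs, map_mul, map_sub, hX, sub_self, zero_mul, map_zero]
    · rw [← hΦY, ← hs, map_mul, map_sub, hY, sub_self, zero_mul, map_zero]
  rw [hp, map_zero] at hs
  exact (IsLocalization.Away.algebraMap_pow_isUnit (π f) N).mul_left_eq_zero.1 hs

theorem exists_dvd_pow_of_isUnit_algebraMap (f : MvPolynomial (Fin 2) k)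
    [IsLocalization.Away (π f) A] (ψ : MvPolynomial (Fin 2) k →+* R) (hψ : ψ (X 0 * X 1) = 0)
    {p : MvPolynomial (Fin 2) k} (hu : IsUnit (algebraMap S A (π p))) :
    ∃ n : ℕ, ψ p ∣ ψ f ^ n := by
  obtain ⟨n, s, hs⟩ := (IsLocalization.Away.algebraMap_isUnit_iff (π f)).1 hu
  obtain ⟨p', rfl⟩ := hπ s
  have : f ^ n - p * p' ∈ RingHom.ker π := by simp [RingHom.mem_ker, hs]
  obtain ⟨q, hq⟩ := Ideal.mem_span_singleton.1 (hker ▸ this)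
  refine ⟨n, ψ p', ?_⟩
  rw [← map_pow, ← map_mul, ← sub_eq_zero, ← map_sub, hq, map_mul, hψ, zero_mul]

end Localization

section LaurentMonomial

variable {ι G H : Type*} [Fintype ι] [CommGroup G] [Monoid H]

def laurentMonomialHom (w : H →* G) (x y : ι → G) :
    H × Multiplicative (ι → ℤ) × Multiplicative (ι → ℤ) →* G where
  toFun t := w t.1 * (∏ i, x i ^ t.2.1.toAdd i) * ∏ i, y i ^ t.2.2.toAdd i
  map_one' := by simp
  map_mul' t t' := by
    simp only [Prod.fst_mul, Prod.snd_mul, toAdd_mul, Pi.add_apply, zpow_add,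
      Finset.prod_mul_distrib, map_mul]
    ac_rfl

theorem map_laurentMonomialHom {A K : Type*} [CommRing A] [Field K] (Φ : A →+* K)
    (w : H →* Aˣ) (x y : ι → Aˣ) (t : H × Multiplicative (ι → ℤ) × Multiplicative (ι → ℤ)) :
    Φ (laurentMonomialHom w x y t) =
      Φ (w t.1) * (∏ i, Φ (x i) ^ t.2.1.toAdd i) * ∏ i, Φ (y i) ^ t.2.2.toAdd i := by
  have hΦ (u : Aˣ) : Φ u = (Units.map (Φ : A →* K) u : K) := rfl
  simp only [hΦ, laurentMonomialHom, MonoidHom.coe_mk, OneHom.coe_mk, map_mul, map_prod,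
    map_zpow, Units.val_mul, Units.coe_prod, Units.val_zpow_eq_zpow_val]

end LaurentMonomial

section AxesUnits

variable {k ι : Type*} [Field k] [Fintype ι]

noncomputable def nodalXY (r : ι → k) : MvPolynomial (Fin 2) k :=
  (∏ i, (X 0 - C (r i))) * ∏ i, (X 1 - C (r i))

theorem associated_toXAxis_nodalXY {r : ι → k} (hr0 : ∀ i, r i ≠ 0) :
    Associated (toXAxis k (nodalXY r)) (∏ i, (Polynomial.X - Polynomial.C (r i))) := by
  have : toXAxis k (nodalXY r) =
      (∏ i, (Polynomial.X - Polynomial.C (r i))) * Polynomial.C (∏ i, -r i) := by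
    simp [nodalXY, map_prod]
  rw [this]
  exact associated_mul_unit_left _ _ (Polynomial.isUnit_C.2
    (Finset.prod_ne_zero_iff.2 fun i _ => neg_ne_zero.2 (hr0 i)).isUnit)

theorem associated_toYAxis_nodalXY {r : ι → k} (hr0 : ∀ i, r i ≠ 0) :
    Associated (toYAxis k (nodalXY r)) (∏ i, (Polynomial.X - Polynomial.C (r i))) := by
  have : toYAxis k (nodalXY r) =
      Polynomial.C (∏ i, -r i) * ∏ i, (Polynomial.X - Polynomial.C (r i)) := by
    simp [nodalXY, map_prod]
  rw [this]
  exact associated_unit_mul_left _ _ (Polynomial.isUnit_C.2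
    (Finset.prod_ne_zero_iff.2 fun i _ => neg_ne_zero.2 (hr0 i)).isUnit)

variable {S : Type*} [CommRing S] (π : MvPolynomial (Fin 2) k →+* S) (r : ι → k)
  (A : Type*) [CommRing A] [Algebra S A] [IsLocalization.Away (π (nodalXY r)) A]

noncomputable def unitX (i : ι) : Aˣ :=
  (IsLocalization.Away.isUnit_of_dvd (π (nodalXY r))
    (map_dvd π (dvd_mul_of_dvd_left (Finset.dvd_prod_of_mem _ (Finset.mem_univ i)) _))).unit

noncomputable def unitY (i : ι) : Aˣ :=
  (IsLocalization.Away.isUnit_of_dvd (π (nodalXY r))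
    (map_dvd π (dvd_mul_of_dvd_right (Finset.dvd_prod_of_mem _ (Finset.mem_univ i)) _))).unit

noncomputable def axesUnitsHom : kˣ × Multiplicative (ι → ℤ) × Multiplicative (ι → ℤ) →* Aˣ :=
  laurentMonomialHom (Units.map ((algebraMap S A).comp (π.comp C) : k →* A))
    (unitX π r A) (unitY π r A)

variable {π r A}

theorem val_unitX (i : ι) : (unitX π r A i : A) = algebraMap S A (π (X 0 - C (r i))) :=
  IsUnit.unit_spec _

theorem val_unitY (i : ι) : (unitY π r A i : A) = algebraMap S A (π (X 1 - C (r i))) :=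
  IsUnit.unit_spec _

theorem toXAxis_axesUnitsHom {ΦX : A →+* RatFunc k}
    (hΦX : ∀ p, ΦX (algebraMap S A (π p)) = algebraMap k[X] (RatFunc k) (toXAxis k p))
    (t : kˣ × Multiplicative (ι → ℤ) × Multiplicative (ι → ℤ)) :
    ΦX (axesUnitsHom π r A t) = RatFunc.C (t.1 * ∏ i, (-r i) ^ t.2.2.toAdd i) *
      ∏ i, (RatFunc.X - RatFunc.C (r i)) ^ t.2.1.toAdd i := by
  simp [axesUnitsHom, map_laurentMonomialHom, val_unitX, val_unitY, hΦX, map_prod,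
    RatFunc.algebraMap_X, RatFunc.algebraMap_C]
  ring

theorem toYAxis_axesUnitsHom {ΦY : A →+* RatFunc k}
    (hΦY : ∀ p, ΦY (algebraMap S A (π p)) = algebraMap k[X] (RatFunc k) (toYAxis k p))
    (t : kˣ × Multiplicative (ι → ℤ) × Multiplicative (ι → ℤ)) :
    ΦY (axesUnitsHom π r A t) = RatFunc.C (t.1 * ∏ i, (-r i) ^ t.2.1.toAdd i) *
      ∏ i, (RatFunc.X - RatFunc.C (r i)) ^ t.2.2.toAdd i := by
  simp [axesUnitsHom, map_laurentMonomialHom, val_unitX, val_unitY, hΦY, map_prod,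
    RatFunc.algebraMap_X, RatFunc.algebraMap_C]

theorem val_axesUnitsHom_one_one :
    (axesUnitsHom π r A (1, .ofAdd 1, .ofAdd 1) : A) = algebraMap S A (π (nodalXY r)) := by
  simp [axesUnitsHom, laurentMonomialHom, val_unitX, val_unitY, nodalXY, map_prod]

variable (hπ : Function.Surjective π) (hker : RingHom.ker π = Ideal.span {X 0 * X 1})
include hπ hker

theorem exists_lift_to_ratFunc (ev : MvPolynomial (Fin 2) k →ₐ[k] k[X]) (hev : ev (X 0 * X 1) = 0)
    (hevr : Associated (ev (nodalXY r)) (∏ i, (Polynomial.X - Polynomial.C (r i)))) :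
    ∃ Φ : A →+* RatFunc k, ∀ p, Φ (algebraMap S A (π p)) = algebraMap k[X] (RatFunc k) (ev p) :=
  exists_ringHom_algebraMap_comp_eq hπ hker (nodalXY r) ((algebraMap k[X] (RatFunc k)).comp ev)
    (by simp [hev]) (isUnit_iff_ne_zero.2 (RatFunc.algebraMap_ne_zero
      (hevr.ne_zero_iff.2 (Finset.prod_ne_zero_iff.2 fun i _ => Polynomial.X_sub_C_ne_zero _))))

theorem exists_eq_C_mul_prod_of_isUnit (ev : MvPolynomial (Fin 2) k →ₐ[k] k[X])
    (hev : ev (X 0 * X 1) = 0)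
    (hevr : Associated (ev (nodalXY r)) (∏ i, (Polynomial.X - Polynomial.C (r i))))
    {p : MvPolynomial (Fin 2) k} (hu : IsUnit (algebraMap S A (π p))) :
    ∃ c ≠ 0, ∃ e : ι → ℕ,
      ev p = Polynomial.C c * ∏ i, (Polynomial.X - Polynomial.C (r i)) ^ e i := by
  obtain ⟨n, hn⟩ :=
    exists_dvd_pow_of_isUnit_algebraMap (A := A) hπ hker (nodalXY r) ev.toRingHom hev hu
  have hdvd : ev p ∣ (∏ i, (Polynomial.X - Polynomial.C (r i))) ^ n :=
    ((hevr.pow_pow (n := n)).dvd_iff_dvd_right).1 hn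
  refine exists_eq_C_mul_prod_X_sub_C_pow_of_dvd (fun h0 => ?_) hdvd
  rw [h0, zero_dvd_iff] at hdvd
  exact pow_ne_zero _ (Finset.prod_ne_zero_iff.2 fun i _ => Polynomial.X_sub_C_ne_zero _) hdvd


theorem axesUnitsHom_injective (hr : r.Injective) (hr0 : ∀ i, r i ≠ 0) :
    Function.Injective (axesUnitsHom π r A) := by
  obtain ⟨ΦX, hΦX⟩ := exists_lift_to_ratFunc (A := A) hπ hker (toXAxis k) (by simp)
    (associated_toXAxis_nodalXY hr0)
  obtain ⟨ΦY, hΦY⟩ := exists_lift_to_ratFunc (A := A) hπ hker (toYAxis k) (by simp)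
    (associated_toYAxis_nodalXY hr0)
  rw [injective_iff_map_eq_one]
  rintro ⟨c, m, n⟩ h
  have hX := congrArg (fun u : Aˣ => ΦX u) h
  have hY := congrArg (fun u : Aˣ => ΦY u) h
  simp only [toXAxis_axesUnitsHom hΦX, Units.val_one, map_one] at hX
  simp only [toYAxis_axesUnitsHom hΦY, Units.val_one, map_one] at hY
  obtain ⟨-, hm⟩ := eq_one_of_C_mul_prod_X_sub_C_zpow_eq_one hr hX
  obtain ⟨hc, hn⟩ := eq_one_of_C_mul_prod_X_sub_C_zpow_eq_one hr hY
  obtain rfl : m = 1 := toAdd_eq_zero.1 hm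
  obtain rfl : n = 1 := toAdd_eq_zero.1 hn
  simp only [toAdd_one, Pi.zero_apply, zpow_zero, Finset.prod_const_one, mul_one] at hc
  exact Prod.ext (Units.ext hc) rfl

theorem exists_axesUnitsHom_eq_of_isUnit (hr0 : ∀ i, r i ≠ 0) {p : MvPolynomial (Fin 2) k}
    (hu : IsUnit (algebraMap S A (π p))) :
    ∃ t, (axesUnitsHom π r A t : A) = algebraMap S A (π p) := by
  obtain ⟨ΦX, hΦX⟩ := exists_lift_to_ratFunc (A := A) hπ hker (toXAxis k) (by simp)
    (associated_toXAxis_nodalXY hr0)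
  obtain ⟨ΦY, hΦY⟩ := exists_lift_to_ratFunc (A := A) hπ hker (toYAxis k) (by simp)
    (associated_toYAxis_nodalXY hr0)
  obtain ⟨cx, hcx, mx, hpx⟩ := exists_eq_C_mul_prod_of_isUnit hπ hker (toXAxis k) (by simp)
    (associated_toXAxis_nodalXY hr0) hu
  obtain ⟨cy, hcy, ny, hpy⟩ := exists_eq_C_mul_prod_of_isUnit hπ hker (toYAxis k) (by simp)
    (associated_toYAxis_nodalXY hr0) hu
  have hβ (e : ι → ℕ) : ∏ i, (-r i) ^ e i ≠ 0 :=
    Finset.prod_ne_zero_iff.2 fun i _ => pow_ne_zero _ (neg_ne_zero.2 (hr0 i))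
  -- the two restrictions of `p` agree at the origin, which ties `cx` to `cy`
  have h0 : cx * ∏ i, (-r i) ^ mx i = cy * ∏ i, (-r i) ^ ny i := by
    simpa [hpx, hpy, Polynomial.eval_prod] using eval_zero_toXAxis p
  refine ⟨(Units.mk0 (cx / ∏ i, (-r i) ^ ny i) (div_ne_zero hcx (hβ ny)),
    .ofAdd fun i => (mx i : ℤ), .ofAdd fun i => (ny i : ℤ)), ?_⟩
  refine eq_of_toXAxis_eq_of_toYAxis_eq hπ hker (nodalXY r) hΦX hΦY ?_ ?_
  · rw [toXAxis_axesUnitsHom hΦX, hΦX, hpx]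
    simp only [Units.val_mk0, toAdd_ofAdd, zpow_natCast, div_mul_cancel₀ _ (hβ ny)]
    simp [map_prod, RatFunc.algebraMap_X, RatFunc.algebraMap_C]
  · rw [toYAxis_axesUnitsHom hΦY, hΦY, hpy]
    simp only [Units.val_mk0, toAdd_ofAdd, zpow_natCast, div_mul_eq_mul_div, h0,
      mul_div_cancel_right₀ _ (hβ ny)]
    simp [map_prod, RatFunc.algebraMap_X, RatFunc.algebraMap_C]

theorem axesUnitsHom_surjective (hr0 : ∀ i, r i ≠ 0) :
    Function.Surjective (axesUnitsHom π r A) := by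
  intro u
  obtain ⟨N, a, hu⟩ := IsLocalization.Away.surj (π (nodalXY r)) (u : A)
  obtain ⟨p, rfl⟩ := hπ a
  obtain ⟨t, ht⟩ := exists_axesUnitsHom_eq_of_isUnit hπ hker hr0
    (hu ▸ u.isUnit.mul (IsLocalization.Away.algebraMap_pow_isUnit _ N))
  have : axesUnitsHom π r A t = u * axesUnitsHom π r A (1, .ofAdd 1, .ofAdd 1) ^ N := by
    ext
    rw [ht, ← hu, Units.val_mul, Units.val_pow_eq_pow_val, val_axesUnitsHom_one_one]
  refine ⟨t * (1, .ofAdd 1, .ofAdd 1) ^ (-(N : ℤ)), ?_⟩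
  rw [map_mul, map_zpow, this, zpow_neg, zpow_natCast, mul_inv_cancel_right]

end AxesUnits

theorem prod_units_X_sub_C (F : Type*) [Field F] [Fintype F] [DecidableEq F] :
    ∏ b : Fˣ, (Polynomial.X - Polynomial.C (b : F)) =
      Polynomial.X ^ (Fintype.card F - 1) - 1 := by
  classical
  have := Lagrange.nodal_subgroup_eq_X_pow_card_sub_one (⊤ : Subgroup Fˣ)
  simp only [Lagrange.nodal_eq, Subgroup.coe_top, Set.toFinset_univ] at this
  rwa [Fintype.card_congr Subgroup.topEquiv.toEquiv, Fintype.card_units] at this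

theorem prod_X_sub_C_algebraMap_units {F k : Type*} [Field F] [Fintype F] [DecidableEq F]
    [Field k] [Algebra F k] (i : Fin 2) :
    ∏ b : Fˣ, (X i - C (algebraMap F k b) : MvPolynomial (Fin 2) k) =
      X i ^ (Fintype.card F - 1) - 1 := by
  simpa [map_prod, MvPolynomial.algebraMap_apply] using
    congrArg (Polynomial.aeval (R := F) (X i : MvPolynomial (Fin 2) k)) (prod_units_X_sub_C F)

/-- Let `F` be the field with `q` elements, `k` a field which is an
`F`-algebra, `S = k[X,Y]/(XY)` and `A` the localization of `S` away from the image of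
`(X^{q−1} − 1)(Y^{q−1} − 1)`. For each `b ∈ F^×` the images of `X − b` and `Y − b` in
`A` are units, and the map `k^× × (F^× → ℤ) × (F^× → ℤ) → A^×`,
`(c, m, n) ↦ c · ∏_b (X − b)^{m b} · ∏_b (Y − b)^{n b}`, is an isomorphism of abelian
groups (the source carrying the product group structure, `k^×` multiplicative and the
function groups additive). -/
theorem statement16 {F k : Type*} [Field F] [Fintype F] [DecidableEq F] [Field k]
    [Algebra F k] {q : ℕ} (hq : Fintype.card F = q) :
    ∀ (S : Type _) (_ : CommRing S)
      (π : MvPolynomial (Fin 2) k →+* S),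
      Function.Surjective π →
      RingHom.ker π = Ideal.span {(X 0 * X 1 : MvPolynomial (Fin 2) k)} →
      ∀ (A : Type _) (_ : CommRing A) (_ : Algebra S A),
        IsLocalization.Away (π ((X 0 ^ (q - 1) - 1) * (X 1 ^ (q - 1) - 1))) A →
        ∃ (ux uy : Fˣ → Aˣ) (w : kˣ → Aˣ),
          (∀ b : Fˣ, (ux b : A) =
              algebraMap S A (π (X 0 - C (algebraMap F k (b : F))))) ∧
          (∀ b : Fˣ, (uy b : A) =
              algebraMap S A (π (X 1 - C (algebraMap F k (b : F))))) ∧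
          (∀ c : kˣ, (w c : A) = algebraMap S A (π (C (c : k)))) ∧
          (∀ (c c' : kˣ) (m m' n n' : Fˣ → ℤ),
              w (c * c') * (∏ b : Fˣ, ux b ^ (m b + m' b)) *
                  (∏ b : Fˣ, uy b ^ (n b + n' b)) =
                (w c * (∏ b : Fˣ, ux b ^ m b) * ∏ b : Fˣ, uy b ^ n b) *
                  (w c' * (∏ b : Fˣ, ux b ^ m' b) * ∏ b : Fˣ, uy b ^ n' b)) ∧
          Function.Bijective (fun t : kˣ × (Fˣ → ℤ) × (Fˣ → ℤ) =>
            w t.1 * (∏ b : Fˣ, ux b ^ t.2.1 b) * ∏ b : Fˣ, uy b ^ t.2.2 b) := by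
  intro S _ π hπ hker A _ _ hloc
  subst hq
  set r : Fˣ → k := fun b => algebraMap F k b
  have hr : r.Injective := fun b b' h => Units.ext ((algebraMap F k).injective h)
  have hr0 (b : Fˣ) : r b ≠ 0 := (map_ne_zero _).2 b.ne_zero
  rw [← prod_X_sub_C_algebraMap_units, ← prod_X_sub_C_algebraMap_units] at hloc
  change IsLocalization.Away (π (nodalXY r)) A at hloc
  refine ⟨unitX π r A, unitY π r A, Units.map ((algebraMap S A).comp (π.comp C) : k →* A),
    val_unitX, val_unitY, fun c => rfl,
    fun c c' m m' n n' => map_mul (axesUnitsHom π r A)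
      (c, Multiplicative.ofAdd m, Multiplicative.ofAdd n)
      (c', Multiplicative.ofAdd m', Multiplicative.ofAdd n'), ?_⟩
  exact Function.Bijective.comp
    ⟨axesUnitsHom_injective hπ hker hr hr0, axesUnitsHom_surjective hπ hker hr0⟩
    ((Equiv.refl kˣ).prodCongr (Multiplicative.ofAdd.prodCongr Multiplicative.ofAdd)).bijective
end
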